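/- arXiv:2012.14246 — 7 statements merged into one kernel-verified Lean document; each statement's English description precedes it below -/
import Mathlib

section
/- Let α₁,…,αₙ be exchangeable real-valued random variables (their joint distribution is invariant under every permutation of indices), and suppose almost surely all αᵢ are distinct. Then the rank of αₙ among α₁,…,αₙ, i.e. the random variable |{i ≤ n : αᵢ ≤ αₙ}|, is uniformly distributed on {1, 2, …, n}. -/
open MeasureTheory Finset

section Aux

variable {m : ℕ}

lemma rank_lt_rank (x : Fin m → ℝ) {a b : Fin m} (h : x a < x b) :
    (Finset.univ.filter fun i => x i ≤ x a).card
      < (Finset.univ.filter fun i => x i ≤ x b).card := by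
  apply Finset.card_lt_card
  constructor
  · intro i hi
    simp only [Finset.mem_filter, Finset.mem_univ, true_and] at *
    exact hi.trans h.le
  · intro hsub
    have hb : b ∈ Finset.univ.filter fun i => x i ≤ x b := by simp
    have := hsub hb
    simp only [Finset.mem_filter, Finset.mem_univ, true_and] at this
    exact absurd this (not_le.mpr h)

lemma rank_injective {x : Fin m → ℝ} (hx : Function.Injective x) :
    Function.Injective (fun j => (Finset.univ.filter fun i => x i ≤ x j).card) := by
  intro a b hab
  by_contra hne
  rcases lt_or_gt_of_ne (fun h => hne (hx h)) with h | h
  · exact absurd hab (Nat.ne_of_lt (rank_lt_rank x h))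
  · exact absurd hab.symm (Nat.ne_of_lt (rank_lt_rank x h))

lemma rank_mem_Icc (x : Fin m → ℝ) (j : Fin m) :
    (Finset.univ.filter fun i => x i ≤ x j).card ∈ Finset.Icc 1 m := by
  rw [Finset.mem_Icc]
  constructor
  · rw [Nat.one_le_iff_ne_zero, ← Nat.pos_iff_ne_zero, Finset.card_pos]
    exact ⟨j, by simp⟩
  · exact le_trans (Finset.card_filter_le _ _) (by simp)

lemma rank_surj {x : Fin m → ℝ} (hx : Function.Injective x) {k : ℕ}
    (hk : k ∈ Finset.Icc 1 m) :
    ∃ j, (Finset.univ.filter fun i => x i ≤ x j).card = k := by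
  set f : Fin m → ℕ := fun j => (Finset.univ.filter fun i => x i ≤ x j).card with hf
  have himg : Finset.univ.image f = Finset.Icc 1 m := by
    apply Finset.eq_of_subset_of_card_le
    · intro y hy
      simp only [Finset.mem_image] at hy
      obtain ⟨j, _, rfl⟩ := hy
      exact rank_mem_Icc x j
    · rw [Finset.card_image_of_injective _ (rank_injective hx)]
      simp
  rw [← himg, Finset.mem_image] at hk
  obtain ⟨j, _, hj⟩ := hk
  exact ⟨j, hj⟩

lemma card_filter_perm (π : Equiv.Perm (Fin m)) (P : Fin m → Prop) [DecidablePred P] :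
    (Finset.univ.filter fun i => P (π i)).card = (Finset.univ.filter P).card := by
  apply Finset.card_bij (fun i _ => π i)
  · intro a ha; simp only [Finset.mem_filter, Finset.mem_univ, true_and] at *; exact ha
  · intro a _ b _ h; exact π.injective h
  · intro b hb
    refine ⟨π.symm b, ?_, by simp⟩
    simp only [Finset.mem_filter, Finset.mem_univ, true_and, Equiv.apply_symm_apply] at *
    exact hb

end Aux

/-- If `α 0, …, α n` (so `n+1` variables) are exchangeable real random
variables that are almost surely pairwise distinct, then the rank
`|{i : α i ≤ α (last)}|` of the last one is uniformly distributed on `{1, …, n+1}`. -/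
theorem rank_uniform_of_exchangeable
    {Ω : Type*} [MeasurableSpace Ω] (μ : Measure Ω) [IsProbabilityMeasure μ]
    (n : ℕ) (α : Fin (n + 1) → Ω → ℝ) (hmeas : ∀ i, Measurable (α i))
    (hexch : ∀ π : Equiv.Perm (Fin (n + 1)),
      Measure.map (fun ω => fun i => α (π i) ω) μ
        = Measure.map (fun ω => fun i => α i ω) μ)
    (hdist : ∀ᵐ ω ∂μ, Function.Injective (fun i => α i ω)) :
    ∀ k : ℕ, 1 ≤ k → k ≤ n + 1 →
      μ {ω | (Finset.univ.filter
          (fun i : Fin (n + 1) => α i ω ≤ α (Fin.last n) ω)).card = k}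
        = (↑(n + 1) : ENNReal)⁻¹ := by
  intro k hk1 hk2
  classical
  set F : Fin (n + 1) → Ω → ℕ :=
    fun j ω => (Finset.univ.filter fun i => α i ω ≤ α j ω).card with hF
  have hFmeas : ∀ j, Measurable (F j) := by
    intro j
    have heq : F j = fun ω => ∑ i : Fin (n + 1), if α i ω ≤ α j ω then 1 else 0 := by
      funext ω
      exact Finset.card_filter _ _
    rw [heq]
    apply Finset.measurable_sum
    intro i _
    exact Measurable.ite (measurableSet_le (hmeas i) (hmeas j))
      measurable_const measurable_const
  set A : Fin (n + 1) → Set Ω := fun j => {ω | F j ω = k} with hA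
  have hAmeas : ∀ j, MeasurableSet (A j) := fun j => (hFmeas j) (measurableSet_singleton k)
  set S : Set (Fin (n + 1) → ℝ) :=
    {x | (Finset.univ.filter fun i => x i ≤ x (Fin.last n)).card = k} with hS
  have hSmeas : MeasurableSet S := by
    have heq : (fun x : Fin (n + 1) → ℝ =>
        (Finset.univ.filter fun i => x i ≤ x (Fin.last n)).card)
        = fun x => ∑ i : Fin (n + 1), if x i ≤ x (Fin.last n) then 1 else 0 := by
      funext x; exact Finset.card_filter _ _
    have hm : Measurable (fun x : Fin (n + 1) → ℝ =>
        (Finset.univ.filter fun i => x i ≤ x (Fin.last n)).card) := by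
      rw [heq]
      apply Finset.measurable_sum
      intro i _
      exact Measurable.ite (measurableSet_le (measurable_pi_apply i)
        (measurable_pi_apply (Fin.last n))) measurable_const measurable_const
    exact hm (measurableSet_singleton k)
  have hmeasvec : Measurable (fun ω => fun i => α i ω) :=
    measurable_pi_lambda _ (fun i => hmeas i)
  have hkey : ∀ j, μ (A j) = μ (A (Fin.last n)) := by
    intro j
    set π : Equiv.Perm (Fin (n + 1)) := Equiv.swap (Fin.last n) j with hπ
    have hmeasvecπ : Measurable (fun ω => fun i => α (π i) ω) :=
      measurable_pi_lambda _ (fun i => hmeas (π i))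
    have h1 : (fun ω => fun i => α (π i) ω) ⁻¹' S = A j := by
      ext ω
      simp only [Set.mem_preimage, hS, Set.mem_setOf_eq, hA, hF]
      have hπlast : π (Fin.last n) = j := Equiv.swap_apply_left _ _
      simp only [hπlast]
      rw [card_filter_perm π (fun i => α i ω ≤ α j ω)]
    have h2 : (fun ω => fun i => α i ω) ⁻¹' S = A (Fin.last n) := rfl
    calc μ (A j) = μ ((fun ω => fun i => α (π i) ω) ⁻¹' S) := by rw [h1]
      _ = Measure.map (fun ω => fun i => α (π i) ω) μ S :=
          (Measure.map_apply hmeasvecπ hSmeas).symm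
      _ = Measure.map (fun ω => fun i => α i ω) μ S := by rw [hexch π]
      _ = μ ((fun ω => fun i => α i ω) ⁻¹' S) := Measure.map_apply hmeasvec hSmeas
      _ = μ (A (Fin.last n)) := by rw [h2]
  -- injectivity event
  set I : Set Ω := {ω | Function.Injective (fun i => α i ω)} with hI
  have hImeas : MeasurableSet I := by
    have heq : I = ⋂ i, ⋂ j, {ω | α i ω = α j ω → i = j} := by
      ext ω
      simp only [hI, Set.mem_setOf_eq, Set.mem_iInter, Function.Injective]
    rw [heq]
    apply MeasurableSet.iInter; intro i
    apply MeasurableSet.iInter; intro j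
    by_cases hij : i = j
    · subst hij
      have : {ω : Ω | α i ω = α i ω → i = i} = Set.univ := by ext ω; simp
      rw [this]; exact MeasurableSet.univ
    · have : {ω : Ω | α i ω = α j ω → i = j} = {ω | α i ω ≠ α j ω} := by
        ext ω; simp [hij]
      rw [this]
      exact (measurableSet_eq_fun (hmeas i) (hmeas j)).compl
  have hcompl : μ Iᶜ = 0 := by
    have h := hdist
    rw [MeasureTheory.ae_iff] at h
    have : Iᶜ = {a | ¬ Function.Injective fun i => α i a} := by
      ext ω; simp [hI]
    rw [this]; exact h
  have hIone : μ I = 1 := by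
    have := measure_compl hImeas (measure_ne_top μ I)
    rw [hcompl, measure_univ] at this
    have hle : μ I ≤ 1 := prob_le_one
    rcases eq_or_lt_of_le hle with h | h
    · exact h
    · exfalso
      rw [eq_comm, tsub_eq_zero_iff_le] at this
      exact absurd this (not_le.mpr h)
  set B : Fin (n + 1) → Set Ω := fun j => A j ∩ I with hB
  have hBmeas : ∀ j, MeasurableSet (B j) := fun j => (hAmeas j).inter hImeas
  have hBdisj : Pairwise (Function.onFun Disjoint B) := by
    intro j j' hne
    rw [Function.onFun, Set.disjoint_left]
    intro ω hωj hωj'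
    have hinj : Function.Injective (fun i => α i ω) := hωj.2
    have h1 : F j ω = k := hωj.1
    have h2 : F j' ω = k := hωj'.1
    exact hne (rank_injective hinj (h1.trans h2.symm))
  have hBunion : (⋃ j, B j) = I := by
    ext ω
    simp only [Set.mem_iUnion, hB, Set.mem_inter_iff]
    constructor
    · rintro ⟨j, _, hωI⟩; exact hωI
    · intro hωI
      obtain ⟨j, hj⟩ := rank_surj (x := fun i => α i ω) hωI
        (Finset.mem_Icc.mpr ⟨hk1, hk2⟩)
      exact ⟨j, hj, hωI⟩
  have hAB : ∀ j, μ (B j) = μ (A j) := by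
    intro j
    apply le_antisymm (measure_mono Set.inter_subset_left)
    have hsub : A j ⊆ B j ∪ Iᶜ := by
      intro ω hω
      by_cases hωI : ω ∈ I
      · exact Or.inl ⟨hω, hωI⟩
      · exact Or.inr hωI
    calc μ (A j) ≤ μ (B j ∪ Iᶜ) := measure_mono hsub
      _ ≤ μ (B j) + μ Iᶜ := measure_union_le _ _
      _ = μ (B j) := by rw [hcompl, add_zero]
  have hsum : (↑(n + 1) : ENNReal) * μ (A (Fin.last n)) = 1 := by
    have h1 : μ (⋃ j, B j) = ∑' j, μ (B j) := measure_iUnion hBdisj hBmeas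
    rw [hBunion, hIone, tsum_fintype] at h1
    have h2 : ∀ j, μ (B j) = μ (A (Fin.last n)) := fun j => (hAB j).trans (hkey j)
    rw [Finset.sum_congr rfl (fun j _ => h2 j), Finset.sum_const, Finset.card_univ,
      Fintype.card_fin, nsmul_eq_mul] at h1
    exact_mod_cast h1.symm
  have hn0 : (↑(n + 1) : ENNReal) ≠ 0 := by
    simp
  have hnt : (↑(n + 1) : ENNReal) ≠ ⊤ := by
    simp
  have : μ (A (Fin.last n)) = (↑(n + 1) : ENNReal)⁻¹ := by
    calc μ (A (Fin.last n))
        = (↑(n + 1) : ENNReal)⁻¹ * ((↑(n + 1) : ENNReal) * μ (A (Fin.last n))) := by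
          rw [← mul_assoc, ENNReal.inv_mul_cancel hn0 hnt, one_mul]
      _ = (↑(n + 1) : ENNReal)⁻¹ := by rw [hsum, mul_one]
  exact this
end

section
/- Let α₁,…,αₙ be exchangeable real-valued random variables and let τ be uniformly distributed on [0,1], independent of (α₁,…,αₙ). Define the smoothed p-value P := (|{i ≤ n : αᵢ < αₙ}| + τ·|{i ≤ n : αᵢ = αₙ}|)/n. Then P is uniformly distributed on [0,1]. -/
open MeasureTheory Finset ProbabilityTheory
open scoped ENNReal

namespace SmoothedPValueAux

variable {n : ℕ}

noncomputable def cL (x : Fin (n + 1) → ℝ) (j : Fin (n + 1)) : ℕ :=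
  (Finset.univ.filter fun i => x i < x j).card

noncomputable def cE (x : Fin (n + 1) → ℝ) (j : Fin (n + 1)) : ℕ :=
  (Finset.univ.filter fun i => x i = x j).card

noncomputable def cU (x : Fin (n + 1) → ℝ) (j : Fin (n + 1)) : ℕ :=
  (Finset.univ.filter fun i => x i ≤ x j).card

noncomputable def clamp01 (a : ℝ) : ℝ := min (max a 0) 1

lemma clamp01_nonneg (a : ℝ) : 0 ≤ clamp01 a := by
  unfold clamp01; positivity

lemma cL_add_cE (x : Fin (n + 1) → ℝ) (j : Fin (n + 1)) : cL x j + cE x j = cU x j := by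
  unfold cL cE cU
  rw [← Finset.card_union_of_disjoint]
  · congr 1
    rw [← Finset.filter_or]
    apply Finset.filter_congr
    intro i _
    simp [le_iff_lt_or_eq]
  · rw [Finset.disjoint_filter]
    intro i _ h1 h2
    exact absurd h2 (ne_of_lt h1)

lemma cE_pos (x : Fin (n + 1) → ℝ) (j : Fin (n + 1)) : 0 < cE x j := by
  apply Finset.card_pos.2
  exact ⟨j, by simp [cE]⟩

lemma cL_lt_cU (x : Fin (n + 1) → ℝ) (j : Fin (n + 1)) : cL x j < cU x j := by
  have := cL_add_cE x j
  have := cE_pos x j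
  omega

lemma cU_le (x : Fin (n + 1) → ℝ) (j : Fin (n + 1)) : cU x j ≤ n + 1 := by
  have : cU x j ≤ (Finset.univ : Finset (Fin (n + 1))).card := Finset.card_filter_le _ _
  simpa using this

lemma cL_comp (x : Fin (n + 1) → ℝ) (π : Equiv.Perm (Fin (n + 1))) (j : Fin (n + 1)) :
    cL (x ∘ π) j = cL x (π j) := by
  unfold cL
  apply Finset.card_equiv π
  intro i
  simp

lemma cE_comp (x : Fin (n + 1) → ℝ) (π : Equiv.Perm (Fin (n + 1))) (j : Fin (n + 1)) :
    cE (x ∘ π) j = cE x (π j) := by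
  unfold cE
  apply Finset.card_equiv π
  intro i
  simp

lemma sum_clamp (y : ℝ) (m : ℕ) :
    ∑ k ∈ Finset.range m, clamp01 (y - k) = min (max y 0) m := by
  induction m with
  | zero => simp
  | succ m ih =>
    rw [Finset.sum_range_succ, ih]
    have hm : (0:ℝ) ≤ m := Nat.cast_nonneg m
    push_cast
    unfold clamp01
    simp only [min_def, max_def]
    split_ifs <;> linarith

lemma clamp_div (y : ℝ) {m : ℕ} (hm : 0 < m) :
    clamp01 (y / m) = min (max y 0) m / m := by
  have hm' : (0:ℝ) < m := by exact_mod_cast hm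
  unfold clamp01
  rw [show (0:ℝ) = 0 / m by simp, max_div_div_right hm'.le, show ((0:ℝ)/m) = 0 by simp,
    show (1:ℝ) = m / m by field_simp, min_div_div_right hm'.le]

lemma cU_le_cL_of_lt (x : Fin (n + 1) → ℝ) {j j' : Fin (n + 1)} (h : x j < x j') :
    cU x j ≤ cL x j' := by
  apply Finset.card_le_card
  intro i
  simp only [Finset.mem_filter, Finset.mem_univ, true_and]
  intro hi
  exact lt_of_le_of_lt hi h

lemma eq_of_good (x : Fin (n + 1) → ℝ) {j j' : Fin (n + 1)} {k : ℕ}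
    (h1 : cL x j ≤ k) (h2 : k < cU x j) (h3 : cL x j' ≤ k) (h4 : k < cU x j') :
    x j = x j' := by
  rcases lt_trichotomy (x j) (x j') with h | h | h
  · have := cU_le_cL_of_lt x h; omega
  · exact h
  · have := cU_le_cL_of_lt x h; omega

lemma exists_good (x : Fin (n + 1) → ℝ) {k : ℕ} (hk : k < n + 1) :
    ∃ j, cL x j ≤ k ∧ k < cU x j := by
  obtain ⟨j₁, -, hj₁⟩ := Finset.exists_max_image Finset.univ x Finset.univ_nonempty
  have hj₁U : cU x j₁ = n + 1 := by
    unfold cU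
    rw [Finset.filter_true_of_mem (fun i _ => hj₁ i (Finset.mem_univ i))]
    simp
  set T := Finset.univ.filter (fun j => k < cU x j) with hT
  have hTne : T.Nonempty := ⟨j₁, by simp [hT, hj₁U, hk]⟩
  obtain ⟨j₀, hj₀T, hmin⟩ := T.exists_min_image (fun j => cU x j) hTne
  have hj₀U : k < cU x j₀ := by simpa [hT] using hj₀T
  refine ⟨j₀, ?_, hj₀U⟩
  by_contra hcon
  push_neg at hcon
  set A := Finset.univ.filter (fun i => x i < x j₀) with hA
  have hAne : A.Nonempty := by
    rw [← Finset.card_pos]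
    have : A.card = cL x j₀ := rfl
    omega
  obtain ⟨j', hj'A, hj'max⟩ := A.exists_max_image x hAne
  have hj'lt : x j' < x j₀ := by simpa [hA] using hj'A
  have hU1 : cL x j₀ ≤ cU x j' := by
    apply Finset.card_le_card
    intro i
    simp only [Finset.mem_filter, Finset.mem_univ, true_and]
    intro hi
    exact hj'max i (by simp [hA, hi])
  have hU2 : cU x j' ≤ cL x j₀ := by
    apply Finset.card_le_card
    intro i
    simp only [Finset.mem_filter, Finset.mem_univ, true_and]
    intro hi
    exact lt_of_le_of_lt hi hj'lt
  have hj'T : j' ∈ T := by simp [hT]; omega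
  have := hmin j' hj'T
  have := cL_lt_cU x j₀
  omega

lemma sum_indicator_inv (x : Fin (n + 1) → ℝ) {k : ℕ} (hk : k < n + 1) :
    ∑ j, (if cL x j ≤ k ∧ k < cU x j then ((cE x j : ℝ))⁻¹ else 0) = 1 := by
  obtain ⟨j₀, hj₀1, hj₀2⟩ := exists_good x hk
  have hset : (Finset.univ.filter fun j => cL x j ≤ k ∧ k < cU x j)
      = Finset.univ.filter (fun j => x j = x j₀) := by
    ext j
    simp only [Finset.mem_filter, Finset.mem_univ, true_and]
    constructor
    · rintro ⟨h1, h2⟩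
      exact eq_of_good x h1 h2 hj₀1 hj₀2
    · intro hxj
      have hL : cL x j = cL x j₀ := by
        unfold cL; congr 1; apply Finset.filter_congr; intro i _; simp [hxj]
      have hU : cU x j = cU x j₀ := by
        unfold cU; congr 1; apply Finset.filter_congr; intro i _; simp [hxj]
      omega
  rw [← Finset.sum_filter, hset]
  have hcard : ∀ j ∈ Finset.univ.filter (fun j => x j = x j₀),
      (cE x j : ℝ)⁻¹ = ((Finset.univ.filter (fun j => x j = x j₀)).card : ℝ)⁻¹ := by
    intro j hj
    simp only [Finset.mem_filter, Finset.mem_univ, true_and] at hj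
    congr 2
    unfold cE
    congr 1
    apply Finset.filter_congr
    intro i _
    simp [hj]
  rw [Finset.sum_congr rfl hcard, Finset.sum_const, nsmul_eq_mul]
  have hne : ((Finset.univ.filter (fun j => x j = x j₀)).card : ℝ) ≠ 0 := by
    have : j₀ ∈ Finset.univ.filter (fun j => x j = x j₀) := by simp
    have := Finset.card_pos.2 ⟨j₀, this⟩
    positivity
  field_simp

lemma det_sum (x : Fin (n + 1) → ℝ) (s : ℝ) :
    ∑ j, clamp01 ((s - cL x j) / cE x j) = min (max s 0) (n + 1 : ℝ) := by
  have step1 : ∀ j, clamp01 ((s - cL x j) / cE x j)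
      = ∑ k ∈ Finset.range (n + 1),
          (if cL x j ≤ k ∧ k < cU x j then ((cE x j : ℝ))⁻¹ * clamp01 (s - k) else 0) := by
    intro j
    rw [clamp_div _ (cE_pos x j)]
    have hIco : Finset.Ico (cL x j) (cU x j)
        = (Finset.range (n + 1)).filter (fun k => cL x j ≤ k ∧ k < cU x j) := by
      ext k
      simp only [Finset.mem_Ico, Finset.mem_filter, Finset.mem_range]
      have := cU_le x j
      omega
    have hsum : min (max (s - (cL x j : ℝ)) 0) (cE x j : ℝ)
        = ∑ k ∈ Finset.Ico (cL x j) (cU x j), clamp01 (s - k) := by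
      rw [Finset.sum_Ico_eq_sum_range]
      have hEU : cU x j - cL x j = cE x j := by have := cL_add_cE x j; omega
      rw [hEU, ← sum_clamp (s - (cL x j : ℝ)) (cE x j)]
      apply Finset.sum_congr rfl
      intro k _
      congr 1
      push_cast
      ring
    rw [div_eq_inv_mul, hsum, hIco, Finset.sum_filter, Finset.mul_sum]
    apply Finset.sum_congr rfl
    intro k _
    rw [mul_ite, mul_zero]
  rw [Finset.sum_congr rfl (fun j _ => step1 j), Finset.sum_comm]
  have step2 : ∀ k ∈ Finset.range (n + 1),
      (∑ j, if cL x j ≤ k ∧ k < cU x j then ((cE x j : ℝ))⁻¹ * clamp01 (s - k) else 0)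
        = clamp01 (s - k) := by
    intro k hk
    rw [Finset.mem_range] at hk
    have : (∑ j, if cL x j ≤ k ∧ k < cU x j then ((cE x j : ℝ))⁻¹ * clamp01 (s - k) else 0)
        = (∑ j, if cL x j ≤ k ∧ k < cU x j then ((cE x j : ℝ))⁻¹ else 0) * clamp01 (s - k) := by
      rw [Finset.sum_mul]
      apply Finset.sum_congr rfl
      intro j _
      rw [ite_mul, zero_mul]
    rw [this, sum_indicator_inv x hk, one_mul]
  rw [Finset.sum_congr rfl step2]
  have := sum_clamp s (n + 1)
  push_cast at this ⊢
  exact this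



lemma measurable_cLr (j : Fin (n + 1)) :
    Measurable fun x : Fin (n + 1) → ℝ => (cL x j : ℝ) := by
  have heq : (fun x : Fin (n + 1) → ℝ => (cL x j : ℝ))
      = fun x => ∑ i, if x i < x j then (1:ℝ) else 0 := by
    funext x
    rw [cL, Finset.card_filter]
    push_cast [apply_ite (Nat.cast : ℕ → ℝ)]
    rfl
  rw [heq]
  exact Finset.measurable_sum _ fun i _ =>
    Measurable.ite (measurableSet_lt (measurable_pi_apply i) (measurable_pi_apply j))
      measurable_const measurable_const

lemma measurable_cEr (j : Fin (n + 1)) :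
    Measurable fun x : Fin (n + 1) → ℝ => (cE x j : ℝ) := by
  have heq : (fun x : Fin (n + 1) → ℝ => (cE x j : ℝ))
      = fun x => ∑ i, if x i = x j then (1:ℝ) else 0 := by
    funext x
    rw [cE, Finset.card_filter]
    push_cast [apply_ite (Nat.cast : ℕ → ℝ)]
    rfl
  rw [heq]
  exact Finset.measurable_sum _ fun i _ =>
    Measurable.ite (measurableSet_eq_fun (measurable_pi_apply i) (measurable_pi_apply j))
      measurable_const measurable_const

lemma ofReal_min_one (c : ℝ) :
    ENNReal.ofReal (min c 1) = ENNReal.ofReal (clamp01 c) := by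
  unfold clamp01
  rcases le_total c 0 with h | h
  · have h1 : min c 1 ≤ 0 := le_trans (min_le_left _ _) h
    rw [max_eq_right h, ENNReal.ofReal_eq_zero.2 h1]
    simp
  · rw [max_eq_left h]

lemma clamp_scale (t : ℝ) {c : ℝ} (hc : 0 < c) :
    min (max (t * c) 0) c = c * clamp01 t := by
  unfold clamp01
  simp only [min_def, max_def]
  split_ifs <;> nlinarith

end SmoothedPValueAux

open SmoothedPValueAux

/-- If `α 0, …, α n` are exchangeable real random variables and `τ`
is uniform on `[0,1]` independent of the vector `(α 0, …, α n)`, then the smoothed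
p-value `P := (|{i : α i < α last}| + τ·|{i : α i = α last}|)/(n+1)` is uniformly
distributed on `[0,1]`. -/
theorem smoothed_pvalue_uniform
    {Ω : Type*} [MeasurableSpace Ω] (μ : Measure Ω) [IsProbabilityMeasure μ]
    (n : ℕ) (α : Fin (n + 1) → Ω → ℝ) (hmeas : ∀ i, Measurable (α i))
    (hexch : ∀ π : Equiv.Perm (Fin (n + 1)),
      Measure.map (fun ω => fun i => α (π i) ω) μ
        = Measure.map (fun ω => fun i => α i ω) μ)
    (τ : Ω → ℝ) (hτmeas : Measurable τ)
    (hτunif : Measure.map τ μ = volume.restrict (Set.Icc (0 : ℝ) 1))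
    (hindep : IndepFun τ (fun ω => fun i => α i ω) μ)
    (P : Ω → ℝ)
    (hP : P = fun ω =>
      ((Finset.univ.filter
          (fun i : Fin (n + 1) => α i ω < α (Fin.last n) ω)).card
        + τ ω * (Finset.univ.filter
          (fun i : Fin (n + 1) => α i ω = α (Fin.last n) ω)).card) / (n + 1)) :
    Measure.map P μ = volume.restrict (Set.Icc (0 : ℝ) 1) := by
  classical
  set X : Ω → (Fin (n + 1) → ℝ) := fun ω i => α i ω with hX_def
  have hX : Measurable X := measurable_pi_lambda _ hmeas
  set ν : Measure (Fin (n + 1) → ℝ) := μ.map X with hν_def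
  haveI hνprob : IsProbabilityMeasure ν := Measure.isProbabilityMeasure_map hX.aemeasurable
  have hlamprob : IsProbabilityMeasure (volume.restrict (Set.Icc (0:ℝ) 1)) :=
    ⟨by simp [Real.volume_Icc]⟩
  set g : (Fin (n + 1) → ℝ) × ℝ → ℝ :=
    fun p => ((cL p.1 (Fin.last n) : ℝ) + p.2 * (cE p.1 (Fin.last n))) / ((n : ℝ) + 1)
    with hg_def
  have hLmeas := measurable_cLr (n := n) (Fin.last n)
  have hEmeas := measurable_cEr (n := n) (Fin.last n)
  have hg : Measurable g :=
    ((hLmeas.comp measurable_fst).add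
      (measurable_snd.mul (hEmeas.comp measurable_fst))).div_const _
  have hPeq : P = g ∘ fun ω => (X ω, τ ω) := by
    funext ω
    simp only [hP, hg_def, Function.comp_apply, cL, cE, hX_def]
  have hjoint : μ.map (fun ω => (X ω, τ ω)) = ν.prod (volume.restrict (Set.Icc (0:ℝ) 1)) := by
    have h := (indepFun_iff_map_prod_eq_prod_map_map hX.aemeasurable
      hτmeas.aemeasurable).mp hindep.symm
    rw [h, hτunif]
  have hmapP : μ.map P = (ν.prod (volume.restrict (Set.Icc (0:ℝ) 1))).map g := by
    rw [hPeq, ← Measure.map_map hg (hX.prodMk hτmeas), hjoint]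
  rw [hmapP]
  haveI : IsProbabilityMeasure ((ν.prod (volume.restrict (Set.Icc (0:ℝ) 1))).map g) :=
    Measure.isProbabilityMeasure_map hg.aemeasurable
  refine Measure.ext_of_Iic _ _ (fun t => ?_)
  rw [Measure.map_apply hg measurableSet_Iic, Measure.prod_apply (hg measurableSet_Iic)]
  set s : ℝ := t * ((n : ℝ) + 1) with hs_def
  have hn1 : (0:ℝ) < (n : ℝ) + 1 := by positivity
  have hlamIic : ∀ c : ℝ, (volume.restrict (Set.Icc (0:ℝ) 1)) (Set.Iic c)
      = ENNReal.ofReal (clamp01 c) := by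
    intro c
    rw [Measure.restrict_apply measurableSet_Iic]
    have hinter : Set.Iic c ∩ Set.Icc 0 1 = Set.Icc 0 (min c 1) := by
      ext u
      simp only [Set.mem_inter_iff, Set.mem_Iic, Set.mem_Icc, le_min_iff]
      tauto
    rw [hinter, Real.volume_Icc, sub_zero, ofReal_min_one]
  set F : Fin (n + 1) → (Fin (n + 1) → ℝ) → ℝ≥0∞ :=
    fun j x => ENNReal.ofReal (clamp01 ((s - (cL x j : ℝ)) / (cE x j : ℝ))) with hF_def
  have hFmeas : ∀ j, Measurable (F j) := by
    intro j
    apply ENNReal.measurable_ofReal.comp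
    have h1 : Measurable fun x : Fin (n + 1) → ℝ => (s - (cL x j : ℝ)) / (cE x j : ℝ) :=
      (measurable_const.sub (measurable_cLr j)).div (measurable_cEr j)
    exact (h1.max measurable_const).min measurable_const
  have hslice : ∀ x : Fin (n + 1) → ℝ,
      (volume.restrict (Set.Icc (0:ℝ) 1)) (Prod.mk x ⁻¹' (g ⁻¹' Set.Iic t))
        = F (Fin.last n) x := by
    intro x
    have hE : (0:ℝ) < (cE x (Fin.last n) : ℝ) := by exact_mod_cast cE_pos x (Fin.last n)
    have hset : (Prod.mk x ⁻¹' (g ⁻¹' Set.Iic t))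
        = Set.Iic ((s - (cL x (Fin.last n) : ℝ)) / (cE x (Fin.last n) : ℝ)) := by
      ext u
      simp only [Set.mem_preimage, Set.mem_Iic, hg_def]
      rw [div_le_iff₀ hn1, le_div_iff₀ hE, hs_def]
      constructor <;> intro h <;> linarith
    rw [hset, hlamIic, hF_def]
  rw [lintegral_congr hslice]
  have hν_exch : ∀ π : Equiv.Perm (Fin (n + 1)),
      ν.map (fun x : Fin (n + 1) → ℝ => x ∘ π) = ν := by
    intro π
    have hcomp : Measurable fun x : Fin (n + 1) → ℝ => x ∘ π :=
      measurable_pi_lambda _ fun i => measurable_pi_apply (π i)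
    rw [hν_def, Measure.map_map hcomp hX]
    exact hexch π
  have hkey : ∀ j, ∫⁻ x, F (Fin.last n) x ∂ν = ∫⁻ x, F j x ∂ν := by
    intro j
    set π := Equiv.swap j (Fin.last n) with hπ
    have hcomp : Measurable fun x : Fin (n + 1) → ℝ => x ∘ π :=
      measurable_pi_lambda _ fun i => measurable_pi_apply (π i)
    calc ∫⁻ x, F (Fin.last n) x ∂ν
        = ∫⁻ x, F (Fin.last n) x ∂(ν.map fun x => x ∘ π) := by rw [hν_exch π]
      _ = ∫⁻ x, F (Fin.last n) (x ∘ π) ∂ν := lintegral_map (hFmeas _) hcomp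
      _ = ∫⁻ x, F j x ∂ν := by
          apply lintegral_congr
          intro x
          simp only [hF_def]
          rw [cL_comp, cE_comp, hπ, Equiv.swap_apply_right]
  have hsum : ∑ j, ∫⁻ x, F j x ∂ν = ENNReal.ofReal (min (max s 0) ((n : ℝ) + 1)) := by
    rw [← lintegral_finset_sum _ (fun j _ => hFmeas j)]
    have hpt : ∀ x, ∑ j, F j x = ENNReal.ofReal (min (max s 0) ((n : ℝ) + 1)) := by
      intro x
      simp only [hF_def]
      rw [← ENNReal.ofReal_sum_of_nonneg (fun j _ => clamp01_nonneg _), det_sum]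
    rw [lintegral_congr hpt, lintegral_const, measure_univ, mul_one]
  have hconst : ((n : ℝ≥0∞) + 1) * ∫⁻ x, F (Fin.last n) x ∂ν
      = ENNReal.ofReal (min (max s 0) ((n : ℝ) + 1)) := by
    rw [← hsum, Finset.sum_congr rfl (fun j _ => (hkey j).symm), Finset.sum_const,
      Finset.card_univ, Fintype.card_fin, nsmul_eq_mul]
    push_cast
    ring
  have hmm : ((n : ℝ≥0∞) + 1) * ENNReal.ofReal (clamp01 t)
      = ENNReal.ofReal (min (max s 0) ((n : ℝ) + 1)) := by
    have h1 : min (max s 0) ((n : ℝ) + 1) = ((n : ℝ) + 1) * clamp01 t := by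
      rw [hs_def]; exact clamp_scale t hn1
    rw [h1, ENNReal.ofReal_mul hn1.le]
    congr 1
    have h2 : ((n : ℝ) + 1) = ((n + 1 : ℕ) : ℝ) := by push_cast; ring
    rw [h2, ENNReal.ofReal_natCast]
    push_cast
    ring
  rw [hlamIic t]
  have hfin := hconst.trans hmm.symm
  exact (ENNReal.mul_right_inj (by simp) (by simp)).mp hfin
end

section
/- Let α₁,…,αₙ be exchangeable real random variables, τ uniform on [0,1] independent of them, and P := (|{i : αᵢ < αₙ}| + τ·|{i : αᵢ = αₙ}|)/n. Then for every ε ∈ [0,1], Prob(P ≤ ε) = ε; in particular the conservative p-value P' := |{i : αᵢ ≤ αₙ}|/n satisfies Prob(P' ≤ ε) ≤ ε for all ε. -/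
/-!
Given the sample `x`, the smoothed p-value of `x j` is at most `ε` exactly when
`τ ≤ (ε m - L) / E`, where `L = #{i | x i < x j}` and `E = #{i | x i = x j}`; as `τ` is uniform
and independent of `x`, this has conditional probability `clamp ((ε m - L) / E)`. Summed over `j`,
these conditional probabilities equal `ε m`: the value classes of `x` occupy consecutive blocks
`[L, L + E)` of `[0, m)`, and a class of size `E` contributes `E · clamp ((ε m - L) / E)`, the
length of `[0, ε m] ∩ [L, L + E)`. By exchangeability every `j` has the same expected conditional
probability, which is therefore `ε`. The conservative p-value dominates the smoothed one because
`τ ≤ 1` almost surely.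
-/

open MeasureTheory Finset ProbabilityTheory

namespace SmoothedPValue

section Counts

variable {ι β : Type*} [Fintype ι] [LinearOrder β] (x : ι → β)

def countLT (v : β) : ℕ := #{i | x i < v}

def countLE (v : β) : ℕ := #{i | x i ≤ v}

def countEq (v : β) : ℕ := #{i | x i = v}

theorem countLE_eq_countLT_add_countEq (v : β) : countLE x v = countLT x v + countEq x v := by
  classical
  rw [countLT, countEq, ← card_union_of_disjoint (disjoint_filter.2 fun _ _ h => h.ne),
    ← filter_or]
  simp_rw [← le_iff_lt_or_eq]
  rfl

theorem countLT_le_countLE (v : β) : countLT x v ≤ countLE x v := by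
  rw [countLE_eq_countLT_add_countEq]
  exact Nat.le_add_right _ _

theorem countLE_le_card (v : β) : countLE x v ≤ Fintype.card ι :=
  card_filter_le _ _

theorem countLE_le_countLT_of_lt {v w : β} (h : v < w) : countLE x v ≤ countLT x w :=
  card_le_card <| monotone_filter_right _ fun _ _ (hi : _ ≤ v) => hi.trans_lt h

theorem countEq_pos {v : β} (hv : v ∈ univ.image x) : 0 < countEq x v := by
  obtain ⟨i, -, rfl⟩ := mem_image.1 hv
  exact card_pos.2 ⟨i, mem_filter.2 ⟨mem_univ i, rfl⟩⟩

theorem countLT_comp_perm (π : Equiv.Perm ι) (v : β) : countLT (x ∘ π) v = countLT x v :=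
  card_equiv π (by simp)

theorem countEq_comp_perm (π : Equiv.Perm ι) (v : β) : countEq (x ∘ π) v = countEq x v :=
  card_equiv π (by simp)

theorem pairwiseDisjoint_Ico_countLT_countLE :
    (Set.univ : Set β).PairwiseDisjoint fun v => Ico (countLT x v) (countLE x v) := by
  intro v _ w _ hvw
  rcases hvw.lt_or_gt with h | h
  · exact disjoint_left.2 fun t ht ht' =>
      ((mem_Ico.1 ht).2.trans_le (countLE_le_countLT_of_lt x h)).not_ge (mem_Ico.1 ht').1
  · exact disjoint_left.2 fun t ht ht' =>
      ((mem_Ico.1 ht').2.trans_le (countLE_le_countLT_of_lt x h)).not_ge (mem_Ico.1 ht).1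

theorem biUnion_Ico_countLT_countLE :
    (univ.image x).biUnion (fun v => Ico (countLT x v) (countLE x v)) =
      range (Fintype.card ι) := by
  refine eq_of_subset_of_card_le (fun t ht => ?_) ?_
  · obtain ⟨v, -, hv⟩ := mem_biUnion.1 ht
    exact mem_range.2 ((mem_Ico.1 hv).2.trans_le (countLE_le_card x v))
  · rw [card_biUnion ((pairwiseDisjoint_Ico_countLT_countLE x).subset (Set.subset_univ _)),
      card_range, ← card_univ, card_eq_sum_card_image x univ]
    refine (sum_congr rfl fun v _ => ?_).le
    rw [Nat.card_Ico, countLE_eq_countLT_add_countEq, Nat.add_sub_cancel_left]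
    rfl

theorem sum_image_countLE_sub_countLT {G : Type*} [AddCommGroup G] (h : ℕ → G) :
    ∑ v ∈ univ.image x, (h (countLE x v) - h (countLT x v)) = h (Fintype.card ι) - h 0 := by
  rw [← sum_range_sub, ← biUnion_Ico_countLT_countLE x,
    sum_biUnion ((pairwiseDisjoint_Ico_countLT_countLE x).subset (Set.subset_univ _))]
  exact sum_congr rfl fun v _ => (sum_Ico_sub h (countLT_le_countLE x v)).symm

end Counts

theorem mul_clamp_div_eq {e : ℝ} (he : 0 < e) (c l : ℝ) :
    e * max (min ((c - l) / e) 1) 0 = min c (l + e) - min c l := by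
  rw [mul_max_of_nonneg _ _ he.le, mul_min_of_nonneg _ _ he.le, mul_div_cancel₀ _ he.ne', mul_one,
    mul_zero]
  simp only [min_def, max_def]
  split_ifs <;> linarith

theorem sum_clamp_div_countEq {ι : Type*} [Fintype ι] (x : ι → ℝ) {c : ℝ} (hc : 0 ≤ c) :
    ∑ j, max (min ((c - countLT x (x j)) / countEq x (x j)) 1) 0 = min c (Fintype.card ι) := by
  rw [sum_comp (fun v => max (min ((c - countLT x v) / countEq x v) 1) 0) x]
  convert sum_image_countLE_sub_countLT x (fun k : ℕ => min c (k : ℝ)) using 1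
  · refine sum_congr rfl fun v hv => ?_
    rw [nsmul_eq_mul, countLE_eq_countLT_add_countEq, Nat.cast_add]
    exact mul_clamp_div_eq (Nat.cast_pos.2 (countEq_pos x hv)) _ _
  · rw [Nat.cast_zero, min_eq_right hc, sub_zero]

theorem restrict_Icc_zero_one_apply_Iic (a : ℝ) :
    volume.restrict (Set.Icc (0 : ℝ) 1) (Set.Iic a) = ENNReal.ofReal (max (min a 1) 0) := by
  have h : Set.Iic a ∩ Set.Icc 0 1 = Set.Icc 0 (min a 1) := by
    ext t
    simp only [Set.mem_inter_iff, Set.mem_Iic, Set.mem_Icc, le_min_iff]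
    tauto
  rw [Measure.restrict_apply measurableSet_Iic, h, Real.volume_Icc, sub_zero, ENNReal.ofReal_max,
    ENNReal.ofReal_zero, _root_.max_zero]

section Probability

variable {Ω : Type*} [MeasurableSpace Ω] {μ : Measure Ω}

theorem measure_le_comp_eq_lintegral [IsFiniteMeasure μ] {E : Type*} [MeasurableSpace E]
    {X : Ω → E} {τ : Ω → ℝ} (hX : Measurable X) (hτ : Measurable τ) (hind : IndepFun X τ μ)
    {g : E → ℝ} (hg : Measurable g) :
    μ {ω | τ ω ≤ g (X ω)} = ∫⁻ x, μ.map τ (Set.Iic (g x)) ∂(μ.map X) := by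
  have hs : MeasurableSet {p : E × ℝ | p.2 ≤ g p.1} :=
    measurableSet_le measurable_snd (hg.comp measurable_fst)
  rw [show {ω | τ ω ≤ g (X ω)} = (fun ω => (X ω, τ ω)) ⁻¹' {p | p.2 ≤ g p.1} from rfl,
    ← Measure.map_apply (hX.prodMk hτ) hs,
    (indepFun_iff_map_prod_eq_prod_map_map hX.aemeasurable hτ.aemeasurable).1 hind,
    Measure.prod_apply hs]
  rfl

theorem card_mul_lintegral_eq_of_perm_invariant {ι β : Type*} [Fintype ι] [MeasurableSpace β]
    {ν : Measure (ι → β)} [IsProbabilityMeasure ν]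
    (hν : ∀ π : Equiv.Perm ι, ν.map (fun x => x ∘ π) = ν)
    {f : (ι → β) → ι → ENNReal} (hf : ∀ j, Measurable fun x => f x j)
    (hf_perm : ∀ x (π : Equiv.Perm ι) j, f (x ∘ π) j = f x (π j))
    {C : ENNReal} (hC : ∀ x, ∑ j, f x j = C) (j : ι) :
    Fintype.card ι * ∫⁻ x, f x j ∂ν = C := by
  have h_eq (i : ι) : ∫⁻ x, f x i ∂ν = ∫⁻ x, f x j ∂ν := by
    classical
    calc ∫⁻ x, f x i ∂ν = ∫⁻ x, f (x ∘ Equiv.swap i j) j ∂ν := by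
          simp only [hf_perm, Equiv.swap_apply_right]
      _ = ∫⁻ x, f x j ∂(ν.map fun x => x ∘ Equiv.swap i j) :=
          (lintegral_map (hf j) (by fun_prop)).symm
      _ = ∫⁻ x, f x j ∂ν := by rw [hν]
  calc (Fintype.card ι : ENNReal) * ∫⁻ x, f x j ∂ν = ∑ i, ∫⁻ x, f x i ∂ν := by
        simp only [h_eq, sum_const, card_univ, nsmul_eq_mul]
    _ = ∫⁻ x, ∑ i, f x i ∂ν := (lintegral_finsetSum _ fun i _ => hf i).symm
    _ = C := by simp only [hC, lintegral_const, measure_univ, mul_one]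

end Probability

section PValue

variable {ι : Type*} [Fintype ι]

noncomputable def smoothedPValue (x : ι → ℝ) (j : ι) (t : ℝ) : ℝ :=
  (countLT x (x j) + t * countEq x (x j)) / Fintype.card ι

noncomputable def conservativePValue (x : ι → ℝ) (j : ι) : ℝ :=
  countLE x (x j) / Fintype.card ι

theorem smoothedPValue_le_iff (x : ι → ℝ) (j : ι) (t ε : ℝ) :
    smoothedPValue x j t ≤ ε ↔
      t ≤ (ε * Fintype.card ι - countLT x (x j)) / countEq x (x j) := by
  have hm : (0 : ℝ) < Fintype.card ι := Nat.cast_pos.2 (Fintype.card_pos_iff.2 ⟨j⟩)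
  have he : (0 : ℝ) < countEq x (x j) :=
    Nat.cast_pos.2 (countEq_pos x (mem_image_of_mem x (mem_univ j)))
  rw [smoothedPValue, div_le_iff₀ hm, le_div_iff₀ he]
  constructor <;> intro <;> linarith

theorem smoothedPValue_le_conservativePValue (x : ι → ℝ) (j : ι) {t : ℝ} (ht : t ≤ 1) :
    smoothedPValue x j t ≤ conservativePValue x j := by
  rw [smoothedPValue, conservativePValue, countLE_eq_countLT_add_countEq, Nat.cast_add]
  gcongr
  exact mul_le_of_le_one_left (Nat.cast_nonneg _) ht

theorem measurable_countLT_apply (j : ι) :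
    Measurable fun x : ι → ℝ => (countLT x (x j) : ℝ) := by
  simp_rw [countLT, card_filter, Nat.cast_sum, Nat.cast_ite, Nat.cast_one, Nat.cast_zero]
  exact Finset.measurable_sum _ fun i _ => Measurable.ite
    (measurableSet_lt (measurable_pi_apply i) (measurable_pi_apply j))
    measurable_const measurable_const

theorem measurable_countEq_apply (j : ι) :
    Measurable fun x : ι → ℝ => (countEq x (x j) : ℝ) := by
  simp_rw [countEq, card_filter, Nat.cast_sum, Nat.cast_ite, Nat.cast_one, Nat.cast_zero]
  exact Finset.measurable_sum _ fun i _ => Measurable.ite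
    (measurableSet_eq_fun (measurable_pi_apply i) (measurable_pi_apply j))
    measurable_const measurable_const

variable {Ω : Type*} [MeasurableSpace Ω] {μ : Measure Ω} [IsProbabilityMeasure μ]
  {X : Ω → ι → ℝ} {τ : Ω → ℝ}

theorem measure_smoothedPValue_le (hX : Measurable X)
    (hexch : ∀ π : Equiv.Perm ι, μ.map (fun ω => X ω ∘ π) = μ.map X) (hτ : Measurable τ)
    (hunif : μ.map τ = volume.restrict (Set.Icc 0 1)) (hind : IndepFun X τ μ) (j : ι)
    {ε : ℝ} (hε : ε ∈ Set.Icc (0 : ℝ) 1) :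
    μ {ω | smoothedPValue (X ω) j (τ ω) ≤ ε} = ENNReal.ofReal ε := by
  simp_rw [smoothedPValue_le_iff]
  set m := Fintype.card ι
  set c := ε * m
  let cdf (x : ι → ℝ) (i : ι) : ℝ := max (min ((c - countLT x (x i)) / countEq x (x i)) 1) 0
  have hg (i : ι) : Measurable fun x : ι → ℝ => (c - countLT x (x i)) / countEq x (x i) :=
    (measurable_const.sub (measurable_countLT_apply i)).div (measurable_countEq_apply i)
  have : IsProbabilityMeasure (μ.map X) := Measure.isProbabilityMeasure_map hX.aemeasurable
  have hν (π : Equiv.Perm ι) : (μ.map X).map (fun x => x ∘ π) = μ.map X := by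
    rw [Measure.map_map (by fun_prop) hX]
    exact hexch π
  have hsum (x : ι → ℝ) : ∑ i, ENNReal.ofReal (cdf x i) = ENNReal.ofReal c := by
    rw [← ENNReal.ofReal_sum_of_nonneg fun i _ => le_max_right _ _,
      sum_clamp_div_countEq x (mul_nonneg hε.1 (Nat.cast_nonneg m)),
      min_eq_left (mul_le_of_le_one_left (Nat.cast_nonneg m) hε.2)]
  have key := card_mul_lintegral_eq_of_perm_invariant hν
    (f := fun x i => ENNReal.ofReal (cdf x i))
    (fun i => (((hg i).min measurable_const).max measurable_const).ennreal_ofReal)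
    (fun x π i => by simp only [cdf, countLT_comp_perm, countEq_comp_perm, Function.comp_apply])
    hsum j
  rw [measure_le_comp_eq_lintegral hX hτ hind (hg j), hunif]
  simp_rw [restrict_Icc_zero_one_apply_Iic]
  refine (ENNReal.mul_right_inj (Nat.cast_ne_zero.2 (Fintype.card_pos_iff.2 ⟨j⟩).ne')
    (ENNReal.natCast_ne_top m)).1 (key.trans ?_)
  rw [ENNReal.ofReal_mul' (Nat.cast_nonneg m), ENNReal.ofReal_natCast, mul_comm]

theorem measure_conservativePValue_le (hX : Measurable X)
    (hexch : ∀ π : Equiv.Perm ι, μ.map (fun ω => X ω ∘ π) = μ.map X) (hτ : Measurable τ)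
    (hunif : μ.map τ = volume.restrict (Set.Icc 0 1)) (hind : IndepFun X τ μ) (j : ι)
    {ε : ℝ} (hε : ε ∈ Set.Icc (0 : ℝ) 1) :
    μ {ω | conservativePValue (X ω) j ≤ ε} ≤ ENNReal.ofReal ε := by
  have hτ_le : ∀ᵐ ω ∂μ, τ ω ≤ 1 := ae_of_ae_map hτ.aemeasurable <| by
    rw [hunif]
    filter_upwards [ae_restrict_mem measurableSet_Icc] with t ht using ht.2
  calc μ {ω | conservativePValue (X ω) j ≤ ε}
      ≤ μ {ω | smoothedPValue (X ω) j (τ ω) ≤ ε} := measure_mono_ae <| by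
        filter_upwards [hτ_le] with ω hω h
        exact (smoothedPValue_le_conservativePValue _ j hω).trans h
    _ = ENNReal.ofReal ε := measure_smoothedPValue_le hX hexch hτ hunif hind j hε

end PValue

end SmoothedPValue

/-- For exchangeable `α 0, …, α n` and `τ` uniform on `[0,1]`
independent of them, the smoothed p-value
`P := (|{i : α i < α last}| + τ·|{i : α i = α last}|)/(n+1)` satisfies
`Prob(P ≤ ε) = ε` for every `ε ∈ [0,1]`; in particular the conservative p-value
`P' := |{i : α i ≤ α last}|/(n+1)` satisfies `Prob(P' ≤ ε) ≤ ε`. -/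
theorem smoothed_pvalue_exact_and_conservative
    {Ω : Type*} [MeasurableSpace Ω] (μ : Measure Ω) [IsProbabilityMeasure μ]
    (n : ℕ) (α : Fin (n + 1) → Ω → ℝ) (hmeas : ∀ i, Measurable (α i))
    (hexch : ∀ π : Equiv.Perm (Fin (n + 1)),
      Measure.map (fun ω => fun i => α (π i) ω) μ
        = Measure.map (fun ω => fun i => α i ω) μ)
    (τ : Ω → ℝ) (hτmeas : Measurable τ)
    (hτunif : Measure.map τ μ = volume.restrict (Set.Icc (0 : ℝ) 1))
    (hindep : IndepFun τ (fun ω => fun i => α i ω) μ)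
    (P P' : Ω → ℝ)
    (hP : P = fun ω =>
      ((Finset.univ.filter
          (fun i : Fin (n + 1) => α i ω < α (Fin.last n) ω)).card
        + τ ω * (Finset.univ.filter
          (fun i : Fin (n + 1) => α i ω = α (Fin.last n) ω)).card) / (n + 1))
    (hP' : P' = fun ω =>
      ((Finset.univ.filter
          (fun i : Fin (n + 1) => α i ω ≤ α (Fin.last n) ω)).card : ℝ) / (n + 1)) :
    (∀ ε : ℝ, ε ∈ Set.Icc (0 : ℝ) 1 →
        μ {ω | P ω ≤ ε} = ENNReal.ofReal ε)
      ∧ ∀ ε : ℝ, ε ∈ Set.Icc (0 : ℝ) 1 →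
        μ {ω | P' ω ≤ ε} ≤ ENNReal.ofReal ε := by
  set X : Ω → Fin (n + 1) → ℝ := fun ω i => α i ω
  have hX : Measurable X := measurable_pi_lambda _ hmeas
  have hP : P = fun ω => SmoothedPValue.smoothedPValue (X ω) (Fin.last n) (τ ω) := by
    simp [hP, SmoothedPValue.smoothedPValue, SmoothedPValue.countLT, SmoothedPValue.countEq, X]
  have hP' : P' = fun ω => SmoothedPValue.conservativePValue (X ω) (Fin.last n) := by
    simp [hP', SmoothedPValue.conservativePValue, SmoothedPValue.countLE, X]
  subst hP hP'
  exact ⟨fun _ => SmoothedPValue.measure_smoothedPValue_le hX hexch hτmeas hτunif hindep.symm _,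
    fun _ => SmoothedPValue.measure_conservativePValue_le hX hexch hτmeas hτunif hindep.symm _⟩
end

section
/- Let (Fₙ) be a filtration, (Sₙ) a nonnegative martingale with respect to (Fₙ), and (S'ₙ) a nonnegative martingale with respect to (Fₙ) such that for every n the increment ratio of S' is independent of F in the following precise sense: there is an intermediate filtration Gₙ with Fₙ₋₁ ⊆ Gₙ ⊆ Fₙ, Sₙ is Gₙ-measurable, E[S'ₙ | Gₙ] = S'ₙ₋₁, and E[Sₙ | Fₙ₋₁] = Sₙ₋₁. Then the product (Sₙ·S'ₙ) is a martingale with respect to (Fₙ). -/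
open MeasureTheory ProbabilityTheory

/-!
Conditioning on `ℱ n` in two stages, through `G (n + 1)`: given `G (n + 1)` the factor `S (n + 1)`
is known and `S' (n + 1)` averages to `S' n`, leaving `S (n + 1) * S' n`; given `ℱ n` the factor
`S' n` is known and `S (n + 1)` averages to `S n`.
-/

namespace MeasureTheory

variable {Ω : Type*} {𝓕 𝓖 m : MeasurableSpace Ω} {μ : Measure Ω} {f g h : Ω → ℝ}

theorem condExp_mul_ae_eq_of_condExp_right (hf : StronglyMeasurable[𝓖] f)
    (hfg : Integrable (f * g) μ) (hg : Integrable g μ) (hgh : μ[g | 𝓖] =ᵐ[μ] h) :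
    μ[f * g | 𝓖] =ᵐ[μ] f * h := by
  filter_upwards [condExp_mul_of_stronglyMeasurable_left hf hfg hg, hgh] with ω hpull hω
  rw [hpull, Pi.mul_apply, Pi.mul_apply, hω]

theorem condExp_mul_ae_eq_of_le_of_condExp_right (h𝓕𝓖 : 𝓕 ≤ 𝓖) (h𝓖 : 𝓖 ≤ m)
    [SigmaFinite (μ.trim h𝓖)] (hf : StronglyMeasurable[𝓖] f) (hh : StronglyMeasurable[𝓕] h)
    (hfg : Integrable (f * g) μ) (hf_int : Integrable f μ) (hg : Integrable g μ)
    (hgh : μ[g | 𝓖] =ᵐ[μ] h) :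
    μ[f * g | 𝓕] =ᵐ[μ] μ[f | 𝓕] * h := by
  have h_inner : μ[f * g | 𝓖] =ᵐ[μ] f * h := condExp_mul_ae_eq_of_condExp_right hf hfg hg hgh
  have hfh : Integrable (f * h) μ := integrable_condExp.congr h_inner
  calc μ[f * g | 𝓕] =ᵐ[μ] μ[μ[f * g | 𝓖] | 𝓕] := (condExp_condExp_of_le h𝓕𝓖 h𝓖).symm
    _ =ᵐ[μ] μ[f * h | 𝓕] := condExp_congr_ae h_inner
    _ =ᵐ[μ] μ[f | 𝓕] * h := condExp_mul_of_stronglyMeasurable_right hh hfh hf_int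

end MeasureTheory

theorem product_martingale_of_interleaved_general
    {Ω : Type*} {m : MeasurableSpace Ω} (μ : Measure Ω) [IsProbabilityMeasure μ]
    (ℱ : Filtration ℕ m) (G : ℕ → MeasurableSpace Ω)
    (S S' : ℕ → Ω → ℝ)
    (hS : Martingale S ℱ μ) (hS' : Martingale S' ℱ μ)
    (hG_le : ∀ n, ℱ n ≤ G (n + 1)) (hle_G : ∀ n, G (n + 1) ≤ ℱ (n + 1))
    (hSmeas : ∀ n, Measurable[G (n + 1)] (S (n + 1)))
    (hcond : ∀ n, μ[S' (n + 1) | G (n + 1)] =ᵐ[μ] S' n)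
    (hint : ∀ n, Integrable (fun ω => S n ω * S' n ω) μ) :
    Martingale (fun n ω => S n ω * S' n ω) ℱ μ := by
  refine martingale_nat (fun n => (hS.stronglyAdapted n).mul (hS'.stronglyAdapted n)) hint
    fun n => ?_
  have h_two_stage : μ[fun ω => S (n + 1) ω * S' (n + 1) ω | ℱ n]
      =ᵐ[μ] μ[S (n + 1) | ℱ n] * S' n :=
    condExp_mul_ae_eq_of_le_of_condExp_right (hG_le n) ((hle_G n).trans (ℱ.le _))
      (hSmeas n).stronglyMeasurable (hS'.stronglyAdapted n) (hint (n + 1))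
      (hS.integrable _) (hS'.integrable _) (hcond n)
  filter_upwards [h_two_stage, hS.condExp_ae_eq n.le_succ] with ω h_prod h_S
  rw [h_prod, Pi.mul_apply, h_S]

/-- Let `(ℱ n)` be a filtration, `S` and `S'` nonnegative martingales
with respect to `ℱ`, and suppose there are intermediate σ-algebras `G (n+1)` with
`ℱ n ≤ G (n+1) ≤ ℱ (n+1)`, such that `S (n+1)` is `G (n+1)`-measurable and
`E[S' (n+1) | G (n+1)] = S' n`. If all products `S n * S' n` are integrable, then
the product process is a martingale with respect to `ℱ`. -/
theorem product_martingale_of_interleaved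
    {Ω : Type*} {m : MeasurableSpace Ω} (μ : Measure Ω) [IsProbabilityMeasure μ]
    (ℱ : Filtration ℕ m) (G : ℕ → MeasurableSpace Ω)
    (S S' : ℕ → Ω → ℝ)
    (hS : Martingale S ℱ μ) (hS' : Martingale S' ℱ μ)
    (hSnonneg : ∀ n ω, 0 ≤ S n ω) (hS'nonneg : ∀ n ω, 0 ≤ S' n ω)
    (hG_le : ∀ n, ℱ n ≤ G (n + 1)) (hle_G : ∀ n, G (n + 1) ≤ ℱ (n + 1))
    (hSmeas : ∀ n, Measurable[G (n + 1)] (S (n + 1)))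
    (hcond : ∀ n, μ[S' (n + 1) | G (n + 1)] =ᵐ[μ] S' n)
    (hint : ∀ n, Integrable (fun ω => S n ω * S' n ω) μ) :
    Martingale (fun n ω => S n ω * S' n ω) ℱ μ :=
  product_martingale_of_interleaved_general μ ℱ G S S' hS hS' hG_le hle_G hSmeas hcond hint
end

section
/- Let (Z₁,…,Zₙ) be exchangeable random observations with values in X × Y, Y finite. Fix a label y ∈ Y with Prob(Yₙ = y) > 0. Conditionally on the event {Yₙ = y and |{i ≤ n : Yᵢ = y}| = k} for k ≥ 1, suppose the conformity scores of the observations with label y are almost surely distinct. Then the label-conditional p-value P := |{i : Yᵢ = Yₙ, αᵢ ≤ αₙ}| / |{i : Yᵢ = Yₙ}|, computed from an equivariant conformity measure A, is conditionally uniformly distributed on {1/k, 2/k, …, 1} given that event. -/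
open MeasureTheory Finset ProbabilityTheory

/-!
Pass to the law `ν` of the data vector, which is invariant under permutations of the
coordinates. On the permutation-invariant set `G` of configurations with exactly `k` labels `y`,
all carrying distinct scores, exactly `k` indices have label `y`, and exactly one of them has
rank `j` among the label-`y` scores. Both events are permutation-equivariant in the index, so by
exchangeability their probabilities do not depend on the index; summing over the `n + 1` indices
gives `(n + 1) ν(G, Y last = y) = k ν(G)` and `(n + 1) ν(G, Y last = y, rank last = j) = ν(G)`.
On `{Y last = y} ∩ G` the p-value is `rank last / k`, so it equals `j / k` with conditional
probability `1 / k`.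
-/

section Rank

variable {ι α : Type*} [LinearOrder α] {s : Finset ι} {a : ι → α}

lemma card_filter_le_lt_card_filter_le {i i' : ι} (hi' : i' ∈ s) (h : a i < a i') :
    #{m ∈ s | a m ≤ a i} < #{m ∈ s | a m ≤ a i'} := by
  refine card_lt_card ((ssubset_iff_of_subset ?_).2 ⟨i', ?_, ?_⟩)
  · intro m
    simp only [mem_filter]
    exact fun hm => ⟨hm.1, hm.2.trans h.le⟩
  · exact mem_filter.2 ⟨hi', le_rfl⟩
  · simpa using fun _ => h

lemma injOn_card_filter_le (ha : Set.InjOn a s) :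
    Set.InjOn (fun i => #{m ∈ s | a m ≤ a i}) s := by
  intro i hi i' hi' h
  rcases lt_trichotomy (a i) (a i') with hlt | heq | hlt
  · exact absurd h (card_filter_le_lt_card_filter_le hi' hlt).ne
  · exact ha hi hi' heq
  · exact absurd h (card_filter_le_lt_card_filter_le hi hlt).ne'

lemma card_filter_card_filter_le_eq_one (ha : Set.InjOn a s) {j : ℕ} (hj : 1 ≤ j)
    (hjs : j ≤ #s) : #{i ∈ s | #{m ∈ s | a m ≤ a i} = j} = 1 := by
  have hmaps : ∀ i ∈ s, #{m ∈ s | a m ≤ a i} ∈ Icc 1 #s := fun i hi =>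
    mem_Icc.2 ⟨card_pos.2 ⟨i, mem_filter.2 ⟨hi, le_rfl⟩⟩, card_filter_le _ _⟩
  obtain ⟨i, hi, hij⟩ := surj_on_of_inj_on_of_card_le _ hmaps
    (fun _ _ hi hi' h => injOn_card_filter_le ha hi hi' h) (by simp) j (mem_Icc.2 ⟨hj, hjs⟩)
  refine card_eq_one.2 ⟨i, eq_singleton_iff_unique_mem.2 ⟨mem_filter.2 ⟨hi, hij.symm⟩, ?_⟩⟩
  intro i' hi'
  rw [mem_filter] at hi'
  exact injOn_card_filter_le ha hi'.1 hi (hi'.2.trans hij)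

end Rank

lemma card_filter_comp_perm {ι : Type*} [Fintype ι] (π : Equiv.Perm ι) (p : ι → Prop)
    [DecidablePred p] : #{i | p (π i)} = #{i | p i} := by
  simp only [card_filter]
  exact Equiv.sum_comp π fun i => if p i then 1 else 0

lemma measurable_card_filter {ι β : Type*} [MeasurableSpace β] (s : Finset ι)
    (p : ι → β → Prop) [∀ i, DecidablePred (p i)] (hp : ∀ i, MeasurableSet {z | p i z}) :
    Measurable fun z => #{i ∈ s | p i z} := by
  simp only [card_filter]
  exact Finset.measurable_sum _ fun i _ => Measurable.ite (hp i) measurable_const measurable_const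

lemma sum_measure_eq_mul_of_card_eq {ι α : Type*} [Fintype ι] [MeasurableSpace α]
    (ν : Measure α) {R : ι → Set α} (hR : ∀ i, MeasurableSet (R i)) {c : ℕ}
    (hc : ∀ᵐ z ∂ν, {i | z ∈ R i}.ncard = c) : ∑ i, ν (R i) = c * ν Set.univ := by
  classical
  have hsum : ∀ z, ∑ i, (R i).indicator 1 z = ({i | z ∈ R i}.ncard : ENNReal) := by
    intro z
    simp [Set.indicator_apply, Finset.sum_boole, Set.ncard_eq_toFinset_card']
  calc ∑ i, ν (R i) = ∫⁻ z, ∑ i, (R i).indicator 1 z ∂ν := by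
        rw [lintegral_finsetSum _ fun i _ => measurable_one.indicator (hR i)]
        simp_rw [lintegral_indicator_one (hR _)]
    _ = ∫⁻ _, (c : ENNReal) ∂ν :=
        lintegral_congr_ae (hc.mono fun z hz => (hsum z).trans (by rw [hz]))
    _ = c * ν Set.univ := lintegral_const _

namespace MeasureTheory.Measure

variable {ι β : Type*} [MeasurableSpace β]

def IsExchangeable (ν : Measure (ι → β)) : Prop :=
  ∀ π : Equiv.Perm ι, ν.map (fun z i => z (π i)) = ν

lemma IsExchangeable.measure_eq {ν : Measure (ι → β)} (hν : ν.IsExchangeable)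
    {R : ι → Set (ι → β)} (hRm : ∀ i, MeasurableSet (R i))
    (hR : ∀ (π : Equiv.Perm ι) z i, (fun m => z (π m)) ∈ R i ↔ z ∈ R (π i)) (i i' : ι) :
    ν (R i) = ν (R i') := by
  classical
  have hpre : (fun z m => z (Equiv.swap i i' m)) ⁻¹' R i = R i' := by
    ext z
    simp [hR]
  rw [← hpre, ← Measure.map_apply (measurable_pi_lambda _ fun m => measurable_pi_apply _) (hRm i),
    hν]

lemma IsExchangeable.card_mul_measure_eq [Fintype ι] {ν : Measure (ι → β)}
    (hν : ν.IsExchangeable) {R : ι → Set (ι → β)} (hRm : ∀ i, MeasurableSet (R i))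
    (hR : ∀ (π : Equiv.Perm ι) z i, (fun m => z (π m)) ∈ R i ↔ z ∈ R (π i))
    {G : Set (ι → β)} (hG : MeasurableSet G) (hRG : ∀ i, R i ⊆ G) {c : ℕ}
    (hc : ∀ z ∈ G, {i | z ∈ R i}.ncard = c) (i : ι) :
    Fintype.card ι * ν (R i) = c * ν G := by
  have hsum := sum_measure_eq_mul_of_card_eq (ν.restrict G) hRm
    ((ae_restrict_mem hG).mono hc)
  simp only [Measure.restrict_apply (hRm _), Set.inter_eq_left.2 (hRG _),
    Measure.restrict_apply_univ] at hsum
  rw [← hsum, ← Finset.card_univ, ← nsmul_eq_mul, ← Finset.sum_const]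
  exact Finset.sum_congr rfl fun i' _ => hν.measure_eq hRm hR i i'

end MeasureTheory.Measure

section LabelConditional

variable {ι 𝓧 𝓨 : Type*}

def labelCount [Fintype ι] [DecidableEq 𝓨] (y : 𝓨) (z : ι → 𝓧 × 𝓨) : ℕ :=
  #{i | (z i).2 = y}

noncomputable def labelRank [Fintype ι] [DecidableEq 𝓨] (A : (ι → 𝓧 × 𝓨) → ι → ℝ) (y : 𝓨)
    (z : ι → 𝓧 × 𝓨) (i : ι) : ℕ :=
  #{m | (z m).2 = y ∧ A z m ≤ A z i}

noncomputable def labelPValue [Fintype ι] [DecidableEq 𝓨] (A : (ι → 𝓧 × 𝓨) → ι → ℝ)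
    (z : ι → 𝓧 × 𝓨) (i : ι) : ℝ :=
  #{m | (z m).2 = (z i).2 ∧ A z m ≤ A z i} / #{m | (z m).2 = (z i).2}

def distinctScores (A : (ι → 𝓧 × 𝓨) → ι → ℝ) (y : 𝓨) : Set (ι → 𝓧 × 𝓨) :=
  {z | Set.InjOn (A z) {i | (z i).2 = y}}

variable {A : (ι → 𝓧 × 𝓨) → ι → ℝ} {y : 𝓨}

lemma labelCount_comp_perm [Fintype ι] [DecidableEq 𝓨] (π : Equiv.Perm ι) (z : ι → 𝓧 × 𝓨) :
    labelCount y (fun i => z (π i)) = labelCount y z :=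
  card_filter_comp_perm π fun i => (z i).2 = y

lemma labelRank_comp_perm [Fintype ι] [DecidableEq 𝓨]
    (hA : ∀ (π : Equiv.Perm ι) z, A (fun i => z (π i)) = fun i => A z (π i))
    (π : Equiv.Perm ι) (z : ι → 𝓧 × 𝓨) (i : ι) :
    labelRank A y (fun m => z (π m)) i = labelRank A y z (π i) := by
  simp only [labelRank, hA]
  exact card_filter_comp_perm π fun m => (z m).2 = y ∧ A z m ≤ A z (π i)

lemma comp_perm_mem_distinctScores
    (hA : ∀ (π : Equiv.Perm ι) z, A (fun i => z (π i)) = fun i => A z (π i))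
    (π : Equiv.Perm ι) (z : ι → 𝓧 × 𝓨) :
    (fun i => z (π i)) ∈ distinctScores A y ↔ z ∈ distinctScores A y := by
  change Set.InjOn (A fun i => z (π i)) (π ⁻¹' {i | (z i).2 = y}) ↔ _
  rw [hA, ← Function.comp_def, π.injective.injOn.comp_iff, π.image_preimage]
  rfl

lemma card_labelRank_eq_one [Fintype ι] [DecidableEq 𝓨] {z : ι → 𝓧 × 𝓨}
    (hz : z ∈ distinctScores A y) {j : ℕ} (hj : 1 ≤ j) (hjz : j ≤ labelCount y z) :
    #{i | (z i).2 = y ∧ labelRank A y z i = j} = 1 := by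
  have h := card_filter_card_filter_le_eq_one (s := {i | (z i).2 = y}) (a := A z)
    (by simpa [distinctScores] using hz) hj hjz
  simp only [filter_filter] at h
  convert h using 4
  simp only [labelRank]

lemma labelPValue_eq_div_iff [Fintype ι] [DecidableEq 𝓨] {z : ι → 𝓧 × 𝓨} {i : ι}
    (hi : (z i).2 = y) {j k : ℕ} (hk : labelCount y z = k) (hk0 : k ≠ 0) :
    labelPValue A z i = j / k ↔ labelRank A y z i = j := by
  rw [labelPValue, hi]
  change (labelRank A y z i : ℝ) / labelCount y z = _ ↔ _
  rw [hk, div_left_inj' (Nat.cast_ne_zero.2 hk0), Nat.cast_inj]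

variable [MeasurableSpace 𝓧] [MeasurableSpace 𝓨] [MeasurableSingletonClass 𝓨]

lemma measurableSet_label_eq (i : ι) (y : 𝓨) : MeasurableSet {z : ι → 𝓧 × 𝓨 | (z i).2 = y} :=
  (measurable_snd.comp (measurable_pi_apply i)) (measurableSet_singleton y)

lemma measurable_labelCount [Fintype ι] [DecidableEq 𝓨] :
    Measurable (labelCount (𝓧 := 𝓧) (ι := ι) y) :=
  measurable_card_filter _ _ fun i => measurableSet_label_eq i y

lemma measurable_labelRank [Fintype ι] [DecidableEq 𝓨] (hAm : Measurable A) (i : ι) :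
    Measurable fun z => labelRank A y z i :=
  measurable_card_filter _ _ fun m => (measurableSet_label_eq m y).inter
    (measurableSet_le ((measurable_pi_apply m).comp hAm) ((measurable_pi_apply i).comp hAm))

lemma measurableSet_distinctScores [Countable ι] (hAm : Measurable A) :
    MeasurableSet (distinctScores A y) := by
  have hlabel : ∀ i, Measurable fun z : ι → 𝓧 × 𝓨 => (z i).2 = y := fun i =>
    measurableSet_setOfPred.1 (measurableSet_label_eq i y)
  refine measurableSet_setOfPred.2 (Measurable.forall fun a => (hlabel a).imp <|
    Measurable.forall fun b => (hlabel b).imp <| Measurable.imp ?_ measurable_const)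
  exact measurableSet_setOfPred.1
    (measurableSet_eq_fun ((measurable_pi_apply a).comp hAm) ((measurable_pi_apply b).comp hAm))

theorem MeasureTheory.Measure.IsExchangeable.measure_eq_mul_measure_labelRank_eq [Fintype ι]
    [DecidableEq 𝓨] {ν : Measure (ι → 𝓧 × 𝓨)} (hν : ν.IsExchangeable) (hAm : Measurable A)
    (hA : ∀ (π : Equiv.Perm ι) z, A (fun i => z (π i)) = fun i => A z (π i))
    {j k : ℕ} (hj : 1 ≤ j) (hjk : j ≤ k) (i : ι) :
    ν ({z | (z i).2 = y ∧ labelCount y z = k} ∩ distinctScores A y)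
      = k * ν ({z | (z i).2 = y ∧ labelCount y z = k} ∩ distinctScores A y
          ∩ {z | labelRank A y z i = j}) := by
  set L := fun i => {z | (z i).2 = y ∧ labelCount y z = k} ∩ distinctScores A y
  have hcount : MeasurableSet {z : ι → 𝓧 × 𝓨 | labelCount y z = k} :=
    measurable_labelCount (measurableSet_singleton k)
  have hG := hcount.inter (measurableSet_distinctScores (y := y) hAm)
  have hLm : ∀ i, MeasurableSet (L i) := fun i =>
    ((measurableSet_label_eq i y).inter hcount).inter (measurableSet_distinctScores hAm)
  have hLperm : ∀ (π : Equiv.Perm ι) z i, (fun m => z (π m)) ∈ L i ↔ z ∈ L (π i) := by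
    simp [L, labelCount_comp_perm, comp_perm_mem_distinctScores hA]
  have hlabels := hν.card_mul_measure_eq hLm hLperm hG (fun i z hz => ⟨hz.1.2, hz.2⟩) (c := k)
    (fun z ⟨(hzk : labelCount y z = k), hzD⟩ => by
      simp only [L, Set.mem_inter_iff, Set.mem_ofPred_eq, hzk, hzD, and_true]
      rw [← hzk, labelCount]
      simp [Set.ncard_eq_toFinset_card']) i
  have hranks := hν.card_mul_measure_eq (R := fun i => L i ∩ {z | labelRank A y z i = j})
    (fun i => (hLm i).inter (measurable_labelRank hAm i (measurableSet_singleton j)))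
    (fun π z i => by
      simp only [Set.mem_inter_iff, hLperm, Set.mem_ofPred_eq, labelRank_comp_perm hA])
    hG (fun i z hz => ⟨hz.1.1.2, hz.1.2⟩) (c := 1)
    (fun z ⟨(hzk : labelCount y z = k), hzD⟩ => by
      simp only [L, Set.mem_inter_iff, Set.mem_ofPred_eq, hzk, hzD, and_true]
      simpa [Set.ncard_eq_toFinset_card'] using
        card_labelRank_eq_one hzD hj (hjk.trans_eq hzk.symm)) i
  have : Nonempty ι := ⟨i⟩
  rw [← ENNReal.mul_right_inj (by simp) (ENNReal.natCast_ne_top (Fintype.card ι)), hlabels,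
    mul_left_comm, hranks, Nat.cast_one, one_mul]

end LabelConditional

lemma measure_eq_map_apply_of_ae_mem_iff {Ω α : Type*} [MeasurableSpace Ω] [MeasurableSpace α]
    {μ : Measure Ω} {f : Ω → α} {s : Set α} {t : Set Ω} (hf : Measurable f)
    (h : ∀ᵐ ω ∂μ, ω ∈ t ↔ f ω ∈ s) (hs : MeasurableSet s) : μ t = μ.map f s := by
  rw [Measure.map_apply hf hs]
  exact measure_congr (Filter.eventuallyEq_set.2 h)

theorem label_conditional_pvalue_conditionally_uniform_general
    {Ω 𝓧 𝓨 : Type*} [MeasurableSpace Ω] [MeasurableSpace 𝓧]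
    [DecidableEq 𝓨] [MeasurableSpace 𝓨] [MeasurableSingletonClass 𝓨]
    (μ : Measure Ω) [IsProbabilityMeasure μ] (n : ℕ)
    (Z : Fin (n + 1) → Ω → 𝓧 × 𝓨) (hZmeas : ∀ i, Measurable (Z i))
    (hexch : ∀ π : Equiv.Perm (Fin (n + 1)),
      Measure.map (fun ω => fun i => Z (π i) ω) μ
        = Measure.map (fun ω => fun i => Z i ω) μ)
    (A : (Fin (n + 1) → 𝓧 × 𝓨) → (Fin (n + 1) → ℝ)) (hAmeas : Measurable A)
    (hequiv : ∀ (π : Equiv.Perm (Fin (n + 1))) (z : Fin (n + 1) → 𝓧 × 𝓨),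
      A (fun i => z (π i)) = fun i => A z (π i))
    (α : Fin (n + 1) → Ω → ℝ) (hα : α = fun i ω => A (fun j => Z j ω) i)
    (y : 𝓨)
    (k : ℕ)
    (E : Set Ω)
    (hE : E = {ω | (Z (Fin.last n) ω).2 = y
      ∧ (Finset.univ.filter (fun i : Fin (n + 1) => (Z i ω).2 = y)).card = k})
    (hEpos : μ E ≠ 0)
    (hdist : ∀ᵐ ω ∂μ, ω ∈ E →
      Set.InjOn (fun i => α i ω) {i | (Z i ω).2 = y})
    (P : Ω → ℝ)
    (hP : P = fun ω =>
      ((Finset.univ.filter (fun i : Fin (n + 1) =>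
          (Z i ω).2 = (Z (Fin.last n) ω).2
            ∧ α i ω ≤ α (Fin.last n) ω)).card : ℝ)
        / ((Finset.univ.filter (fun i : Fin (n + 1) =>
          (Z i ω).2 = (Z (Fin.last n) ω).2)).card : ℝ)) :
    ∀ j : ℕ, 1 ≤ j → j ≤ k →
      μ[|E] {ω | P ω = (j : ℝ) / (k : ℝ)} = (↑k : ENNReal)⁻¹ := by
  intro j hj hjk
  subst hα hP
  set data : Ω → Fin (n + 1) → 𝓧 × 𝓨 := fun ω i => Z i ω
  set E' := {z | (z (Fin.last n)).2 = y ∧ labelCount y z = k}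
  obtain rfl : E = data ⁻¹' E' := hE
  show μ[{ω | labelPValue A (data ω) (Fin.last n) = j / k} | data ⁻¹' E'] = _
  have hdata : Measurable data := measurable_pi_lambda _ hZmeas
  have hν : (μ.map data).IsExchangeable := fun π => by
    rw [Measure.map_map (measurable_pi_lambda _ fun i => measurable_pi_apply (π i)) hdata]
    exact hexch π
  have hE'm : MeasurableSet E' :=
    (measurableSet_label_eq _ y).inter (measurable_labelCount (measurableSet_singleton k))
  have hSm := hE'm.inter (measurableSet_distinctScores (y := y) hAmeas)
  have hES : ∀ᵐ ω ∂μ, ω ∈ data ⁻¹' E' ↔ data ω ∈ E' ∩ distinctScores A y :=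
    hdist.mono fun ω hω => ⟨fun h => ⟨h, hω h⟩, And.left⟩
  have hPS : ∀ᵐ ω ∂μ, ω ∈ data ⁻¹' E' ∩ {ω | labelPValue A (data ω) (Fin.last n) = j / k}
      ↔ data ω ∈ E' ∩ distinctScores A y ∩ {z | labelRank A y z (Fin.last n) = j} :=
    hES.mono fun ω h => by
      rw [Set.mem_inter_iff, h]
      exact and_congr_right fun hS => labelPValue_eq_div_iff hS.1.1 hS.1.2 (by omega)
  have hsplit := hν.measure_eq_mul_measure_labelRank_eq (y := y) hAmeas hequiv hj hjk (Fin.last n)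
  rw [measure_eq_map_apply_of_ae_mem_iff hdata hES hSm, hsplit] at hEpos
  rw [cond_apply (hdata hE'm), measure_eq_map_apply_of_ae_mem_iff hdata hES hSm,
    measure_eq_map_apply_of_ae_mem_iff hdata hPS
      (hSm.inter (measurable_labelRank hAmeas _ (measurableSet_singleton j))),
    hsplit, ENNReal.mul_inv (Or.inr (measure_ne_top _ _)) (Or.inl (ENNReal.natCast_ne_top k)),
    mul_assoc, ENNReal.inv_mul_cancel (right_ne_zero_of_mul hEpos) (measure_ne_top _ _), mul_one]

/-- Let `Z 0, …, Z n` be exchangeable observations in `𝓧 × 𝓨`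
(`𝓨` finite), `A` an equivariant conformity measure with scores `α`, and fix a
label `y` with `Prob(Y last = y) > 0`.  Conditionally on the event
`E = {Y last = y and |{i : Y i = y}| = k}` (of positive probability, `k ≥ 1`),
if the scores of the label-`y` observations are a.s. distinct, then the
label-conditional p-value
`P = |{i : Y i = Y last, α i ≤ α last}| / |{i : Y i = Y last}|` is conditionally
uniform on `{1/k, …, k/k}`. -/
theorem label_conditional_pvalue_conditionally_uniform
    {Ω 𝓧 𝓨 : Type*} [MeasurableSpace Ω] [MeasurableSpace 𝓧]
    [Fintype 𝓨] [DecidableEq 𝓨] [MeasurableSpace 𝓨] [MeasurableSingletonClass 𝓨]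
    (μ : Measure Ω) [IsProbabilityMeasure μ] (n : ℕ)
    (Z : Fin (n + 1) → Ω → 𝓧 × 𝓨) (hZmeas : ∀ i, Measurable (Z i))
    (hexch : ∀ π : Equiv.Perm (Fin (n + 1)),
      Measure.map (fun ω => fun i => Z (π i) ω) μ
        = Measure.map (fun ω => fun i => Z i ω) μ)
    (A : (Fin (n + 1) → 𝓧 × 𝓨) → (Fin (n + 1) → ℝ)) (hAmeas : Measurable A)
    (hequiv : ∀ (π : Equiv.Perm (Fin (n + 1))) (z : Fin (n + 1) → 𝓧 × 𝓨),
      A (fun i => z (π i)) = fun i => A z (π i))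
    (α : Fin (n + 1) → Ω → ℝ) (hα : α = fun i ω => A (fun j => Z j ω) i)
    (y : 𝓨) (hy : μ {ω | (Z (Fin.last n) ω).2 = y} ≠ 0)
    (k : ℕ) (hk : 1 ≤ k)
    (E : Set Ω)
    (hE : E = {ω | (Z (Fin.last n) ω).2 = y
      ∧ (Finset.univ.filter (fun i : Fin (n + 1) => (Z i ω).2 = y)).card = k})
    (hEpos : μ E ≠ 0)
    (hdist : ∀ᵐ ω ∂μ, ω ∈ E →
      Set.InjOn (fun i => α i ω) {i | (Z i ω).2 = y})
    (P : Ω → ℝ)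
    (hP : P = fun ω =>
      ((Finset.univ.filter (fun i : Fin (n + 1) =>
          (Z i ω).2 = (Z (Fin.last n) ω).2
            ∧ α i ω ≤ α (Fin.last n) ω)).card : ℝ)
        / ((Finset.univ.filter (fun i : Fin (n + 1) =>
          (Z i ω).2 = (Z (Fin.last n) ω).2)).card : ℝ)) :
    ∀ j : ℕ, 1 ≤ j → j ≤ k →
      μ[|E] {ω | P ω = (j : ℝ) / (k : ℝ)} = (↑k : ENNReal)⁻¹ :=
  label_conditional_pvalue_conditionally_uniform_general μ n Z hZmeas hexch A hAmeas hequiv α hα y k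
    E hE hEpos hdist P hP
end

section
/- Let τ be uniform on [0,1] and let a, b be integers with 1 ≤ b and 0 ≤ a, a + b ≤ n. Then the random variable P := (a + τ·b)/n satisfies, for every ε ∈ [0,1]: Prob(P ≤ ε) = 0 if ε ≤ a/n, Prob(P ≤ ε) = (nε − a)/b if a/n ≤ ε ≤ (a+b)/n, and Prob(P ≤ ε) = 1 if ε ≥ (a+b)/n. Consequently, if additionally the pair (a, b) is random, independent of τ, with a = |{i : αᵢ < αₙ}| and b = |{i : αᵢ = αₙ}| for exchangeable (α₁,…,αₙ), then averaging over (a,b) yields Prob(P ≤ ε) = ε. -/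
open MeasureTheory Finset ProbabilityTheory
open scoped ENNReal

/-!
Since `n · P = a + τ b` with `τ` uniform, `Prob(P ≤ ε) = min 1 (max 0 ((nε - a) / b))`, which is
the piecewise formula. For the randomized p-value, conditioning on `α` (independent of `τ`) turns
`Prob(Pα ≤ ε)` into the expectation of that formula with the tie counts `(aᵢ, bᵢ)` of the last
index; by exchangeability every index may play that role, so `n · Prob(Pα ≤ ε)` is the expectation
of `∑ᵢ min 1 (max 0 ((nε - aᵢ) / bᵢ))`. This sum is `min (nε) n = nε` for every configuration:
removing the tie class of the largest value, of size `b` with `a` smaller values, lowers it by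
`b · min 1 (max 0 ((nε - a) / b)) = min (nε) (a + b) - min (nε) a`.
-/

section Clamp

variable {K : Type*} [LinearOrder K] [Zero K] [One K] {t : K}

theorem min_one_max_zero_of_nonpos [ZeroLEOneClass K] (ht : t ≤ 0) : min 1 (max 0 t) = 0 := by
  rw [max_eq_left ht, min_eq_right zero_le_one]

theorem min_one_max_zero_of_mem_Icc (h₀ : 0 ≤ t) (h₁ : t ≤ 1) : min 1 (max 0 t) = t := by
  rw [max_eq_right h₀, min_eq_right h₁]

theorem min_one_max_zero_of_one_le [ZeroLEOneClass K] (ht : 1 ≤ t) : min 1 (max 0 t) = 1 := by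
  rw [max_eq_right (zero_le_one.trans ht), min_eq_left ht]

end Clamp

theorem mul_min_one_max_zero_div_sub {c N E : ℝ} (hE : 0 < E) :
    E * min 1 (max 0 ((c - N) / E)) = min c (N + E) - min c N := by
  rcases le_total c N with hcN | hNc
  · rw [min_one_max_zero_of_nonpos (div_nonpos_of_nonpos_of_nonneg (by linarith) hE.le),
      min_eq_left hcN, min_eq_left (by linarith)]
    ring
  rcases le_total c (N + E) with hcNE | hNEc
  · rw [min_one_max_zero_of_mem_Icc (div_nonneg (by linarith) hE.le)
      ((div_le_one hE).2 (by linarith)), min_eq_left hcNE, min_eq_right hNc,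
      mul_div_cancel₀ _ hE.ne']
  · rw [min_one_max_zero_of_one_le ((one_le_div hE).2 (by linarith)), min_eq_right hNEc,
      min_eq_right hNc]
    ring

theorem sum_min_one_max_zero_tie_eq_min {ι α : Type*} [LinearOrder α] (x : ι → α) {c : ℝ}
    (hc : 0 ≤ c) (s : Finset ι) :
    ∑ i ∈ s, min 1 (max 0 ((c - #{j ∈ s | x j < x i}) / #{j ∈ s | x j = x i})) = min c #s := by
  induction s using Finset.strongInduction with
  | H s ih =>
  obtain rfl | hs := s.eq_empty_or_nonempty
  · simp [hc]
  obtain ⟨m, hm, hmax⟩ := s.exists_max_image x hs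
  set below := {j ∈ s | x j < x m}
  set top := {j ∈ s | ¬ x j < x m}
  have hbelow_ssubset : below ⊂ s := filter_ssubset.2 ⟨m, hm, lt_irrefl _⟩
  have htop_pos : (0 : ℝ) < #top := by
    exact_mod_cast card_pos.2 ⟨m, mem_filter.2 ⟨hm, lt_irrefl _⟩⟩
  have htop_val {i} (hi : i ∈ top) : x i = x m :=
    le_antisymm (hmax i (mem_filter.1 hi).1) (not_lt.1 (mem_filter.1 hi).2)
  have hbelow_lt {i} (hi : i ∈ below) : {j ∈ s | x j < x i} = {j ∈ below | x j < x i} := by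
    ext j; simp only [below, mem_filter] at hi ⊢
    exact ⟨fun h => ⟨⟨h.1, h.2.trans hi.2⟩, h.2⟩, fun h => ⟨h.1.1, h.2⟩⟩
  have hbelow_eq {i} (hi : i ∈ below) : {j ∈ s | x j = x i} = {j ∈ below | x j = x i} := by
    ext j; simp only [below, mem_filter] at hi ⊢
    exact ⟨fun h => ⟨⟨h.1, h.2 ▸ hi.2⟩, h.2⟩, fun h => ⟨h.1.1, h.2⟩⟩
  have htop_lt {i} (hi : i ∈ top) : {j ∈ s | x j < x i} = below := by
    simp only [below, htop_val hi]
  have htop_eq {i} (hi : i ∈ top) : {j ∈ s | x j = x i} = top := by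
    ext j; simp only [top, mem_filter, htop_val hi]
    exact ⟨fun h => ⟨h.1, h.2.not_lt⟩, fun h => ⟨h.1, le_antisymm (hmax j h.1) (not_lt.1 h.2)⟩⟩
  rw [← sum_filter_add_sum_filter_not s (fun i => x i < x m),
    sum_congr rfl fun i hi => by rw [hbelow_lt hi, hbelow_eq hi], ih below hbelow_ssubset,
    sum_congr rfl fun i hi => by rw [htop_lt hi, htop_eq hi], sum_const, nsmul_eq_mul,
    mul_min_one_max_zero_div_sub htop_pos, ← Nat.cast_add, card_filter_add_card_filter_not]
  ring

theorem measurable_card_filter_s17 {X ι : Type*} [MeasurableSpace X] [Fintype ι] {p : X → ι → Prop}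
    [∀ x j, Decidable (p x j)] (hp : ∀ j, MeasurableSet {x | p x j}) :
    Measurable fun x => (#{j | p x j} : ℝ) := by
  simp only [card_filter, Nat.cast_sum, Nat.cast_ite, Nat.cast_one, Nat.cast_zero]
  exact Finset.measurable_sum _ fun j _ => Measurable.ite (hp j) measurable_const measurable_const

theorem volume_restrict_Icc_zero_one_Iic (t : ℝ) :
    volume.restrict (Set.Icc (0 : ℝ) 1) (Set.Iic t) = ENNReal.ofReal (min 1 (max 0 t)) := by
  rw [Measure.restrict_apply measurableSet_Iic, Set.inter_comm, ← Set.Ici_inter_Iic,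
    Set.inter_assoc, Set.Iic_inter_Iic, Set.Ici_inter_Iic, Real.volume_Icc, sub_zero]
  rcases le_total t 0 with ht | ht
  · rw [min_one_max_zero_of_nonpos ht, ENNReal.ofReal_of_nonpos (min_le_of_right_le ht),
      ENNReal.ofReal_zero]
  · rw [max_eq_right ht]

section Uniform

variable {Ω : Type*} [MeasurableSpace Ω] {μ : Measure Ω} {τ : Ω → ℝ}

theorem measure_add_mul_le_of_map_eq_uniform (hτ : Measurable τ)
    (hunif : μ.map τ = volume.restrict (Set.Icc 0 1)) {A B : ℝ} (hB : 0 < B) (c : ℝ) :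
    μ {ω | A + τ ω * B ≤ c} = ENNReal.ofReal (min 1 (max 0 ((c - A) / B))) := by
  have hevent : {ω | A + τ ω * B ≤ c} = τ ⁻¹' Set.Iic ((c - A) / B) := by
    ext ω
    simp only [Set.mem_ofPred_eq, Set.mem_preimage, Set.mem_Iic, le_div_iff₀ hB]
    constructor <;> intro h <;> linarith
  rw [hevent, ← Measure.map_apply hτ measurableSet_Iic, hunif, volume_restrict_Icc_zero_one_Iic]

theorem measure_add_mul_le_eq_lintegral_of_indepFun [IsFiniteMeasure μ] {X : Type*}
    [MeasurableSpace X] {V : Ω → X} (hτ : Measurable τ) (hV : Measurable V)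
    (hunif : μ.map τ = volume.restrict (Set.Icc 0 1)) (hindep : IndepFun τ V μ)
    {A B : X → ℝ} (hA : Measurable A) (hB : Measurable B) (hBpos : ∀ x, 0 < B x) (c : ℝ) :
    μ {ω | A (V ω) + τ ω * B (V ω) ≤ c}
      = ∫⁻ ω, ENNReal.ofReal (min 1 (max 0 ((c - A (V ω)) / B (V ω)))) ∂μ := by
  set S : Set (X × ℝ) := {p | A p.1 + p.2 * B p.1 ≤ c}
  have hS : MeasurableSet S :=
    measurableSet_le ((hA.comp measurable_fst).add (measurable_snd.mul (hB.comp measurable_fst)))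
      measurable_const
  have hpair : Measurable fun ω => (V ω, τ ω) := hV.prodMk hτ
  have hmap : μ.map (fun ω => (V ω, τ ω)) = (μ.map V).prod (μ.map τ) :=
    (indepFun_iff_map_prod_eq_prod_map_map hV.aemeasurable hτ.aemeasurable).1 hindep.symm
  have hslice (x : X) : μ.map τ (Prod.mk x ⁻¹' S)
      = ENNReal.ofReal (min 1 (max 0 ((c - A x) / B x))) := by
    rw [Measure.map_apply hτ (measurable_prodMk_left hS)]
    exact measure_add_mul_le_of_map_eq_uniform hτ hunif (A := A x) (hBpos x) c
  change μ ((fun ω => (V ω, τ ω)) ⁻¹' S) = _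
  rw [← Measure.map_apply hpair hS, hmap, Measure.prod_apply hS, lintegral_congr hslice,
    lintegral_map (by fun_prop) hV]

end Uniform

theorem card_filter_perm_apply {ι : Type*} [Fintype ι] (π : Equiv.Perm ι) (p : ι → Prop)
    [DecidablePred p] : #{j | p (π j)} = #{j | p j} :=
  card_equiv π (by simp)

section Exchangeable

variable {Ω ι : Type*} [MeasurableSpace Ω] {μ : Measure Ω} {V : Ω → ι → ℝ}
  {G : (ι → ℝ) → ι → ℝ≥0∞}

theorem lintegral_eval_eq_of_exchangeable (hV : Measurable V)
    (hexch : ∀ π : Equiv.Perm ι, μ.map (fun ω i => V ω (π i)) = μ.map V)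
    (hG : ∀ i, Measurable fun x => G x i)
    (hGperm : ∀ (π : Equiv.Perm ι) x i, G (x ∘ π) i = G x (π i)) (i j : ι) :
    ∫⁻ ω, G (V ω) i ∂μ = ∫⁻ ω, G (V ω) j ∂μ := by
  classical
  set π := Equiv.swap i j
  have hVπ : Measurable fun ω i => V ω (π i) :=
    measurable_pi_lambda _ fun i => (measurable_pi_apply (π i)).comp hV
  calc ∫⁻ ω, G (V ω) i ∂μ = ∫⁻ x, G x i ∂(μ.map V) := (lintegral_map (hG i) hV).symm
    _ = ∫⁻ x, G x i ∂(μ.map fun ω i => V ω (π i)) := by rw [hexch]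
    _ = ∫⁻ ω, G (V ω ∘ π) i ∂μ := lintegral_map (hG i) hVπ
    _ = ∫⁻ ω, G (V ω) j ∂μ := by simp only [hGperm, π, Equiv.swap_apply_left]

theorem card_mul_lintegral_eval_eq_of_exchangeable [Fintype ι] [IsProbabilityMeasure μ]
    (hV : Measurable V) (hexch : ∀ π : Equiv.Perm ι, μ.map (fun ω i => V ω (π i)) = μ.map V)
    (hG : ∀ i, Measurable fun x => G x i)
    (hGperm : ∀ (π : Equiv.Perm ι) x i, G (x ∘ π) i = G x (π i))
    {C : ℝ≥0∞} (hsum : ∀ x, ∑ i, G x i = C) (i : ι) :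
    Fintype.card ι * ∫⁻ ω, G (V ω) i ∂μ = C := by
  calc Fintype.card ι * ∫⁻ ω, G (V ω) i ∂μ = ∑ j, ∫⁻ ω, G (V ω) j ∂μ := by
        rw [sum_congr rfl fun j _ => lintegral_eval_eq_of_exchangeable hV hexch hG hGperm j i,
          sum_const, card_univ, nsmul_eq_mul]
    _ = ∫⁻ ω, ∑ j, G (V ω) j ∂μ := (lintegral_finsetSum _ fun j _ => (hG j).comp hV).symm
    _ = C := by simp [hsum]

theorem measure_randomizedRank_le [Fintype ι] [IsProbabilityMeasure μ] {τ : Ω → ℝ}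
    (hτ : Measurable τ) (hunif : μ.map τ = volume.restrict (Set.Icc 0 1)) (hV : Measurable V)
    (hexch : ∀ π : Equiv.Perm ι, μ.map (fun ω i => V ω (π i)) = μ.map V)
    (hindep : IndepFun τ V μ) (i : ι) {c : ℝ} (hc₀ : 0 ≤ c) (hc₁ : c ≤ Fintype.card ι) :
    μ {ω | (#{j | V ω j < V ω i} : ℝ) + τ ω * #{j | V ω j = V ω i} ≤ c}
      = ENNReal.ofReal (c / Fintype.card ι) := by
  set G : (ι → ℝ) → ι → ℝ≥0∞ := fun x i => ENNReal.ofReal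
    (min 1 (max 0 ((c - #{j | x j < x i}) / #{j | x j = x i})))
  have hcount_lt (i : ι) : Measurable fun x : ι → ℝ => (#{j | x j < x i} : ℝ) :=
    measurable_card_filter_s17 fun j => measurableSet_lt (measurable_pi_apply j) (measurable_pi_apply i)
  have hcount_eq (i : ι) : Measurable fun x : ι → ℝ => (#{j | x j = x i} : ℝ) :=
    measurable_card_filter_s17 fun j =>
      measurableSet_eq_fun (measurable_pi_apply j) (measurable_pi_apply i)
  have hG (i : ι) : Measurable fun x => G x i :=
    ENNReal.measurable_ofReal.comp <| measurable_const.min <| measurable_const.max <|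
      (measurable_const.sub (hcount_lt i)).div (hcount_eq i)
  have hGperm (π : Equiv.Perm ι) (x : ι → ℝ) (i : ι) : G (x ∘ π) i = G x (π i) := by
    simp only [G, Function.comp_apply, card_filter_perm_apply π (fun j => x j < x (π i)),
      card_filter_perm_apply π (fun j => x j = x (π i))]
  have hsum (x : ι → ℝ) : ∑ i, G x i = ENNReal.ofReal c := by
    rw [← ENNReal.ofReal_sum_of_nonneg fun i _ => le_min zero_le_one (le_max_left 0 _)]
    congr 1
    simpa [min_eq_left hc₁] using sum_min_one_max_zero_tie_eq_min x hc₀ univ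
  have hcard : (0 : ℝ) < Fintype.card ι := by exact_mod_cast Fintype.card_pos_iff.2 ⟨i⟩
  rw [measure_add_mul_le_eq_lintegral_of_indepFun hτ hV hunif hindep (hcount_lt i) (hcount_eq i)
      (fun x => by exact_mod_cast card_pos.2 ⟨i, by simp⟩) c,
    ENNReal.ofReal_div_of_pos hcard, ENNReal.ofReal_natCast,
    ENNReal.eq_div_iff (by simpa using hcard.ne') (ENNReal.natCast_ne_top _)]
  exact card_mul_lintegral_eval_eq_of_exchangeable hV hexch hG hGperm hsum i

end Exchangeable

/-- Let `τ` be uniform on `[0,1]` and `a, b, n` integers with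
`1 ≤ b`, `a + b ≤ n`. Then `P := (a + τ·b)/n` has the stated piecewise CDF;
consequently, if `(a, b)` are the (random) tie counts of exchangeable
`(α 1, …, α n)` independent of `τ`, averaging yields `Prob(P ≤ ε) = ε`. -/
theorem smoothed_pvalue_cdf_piecewise_and_exact
    {Ω : Type*} [MeasurableSpace Ω] (μ : Measure Ω) [IsProbabilityMeasure μ]
    (τ : Ω → ℝ) (hτmeas : Measurable τ)
    (hτunif : Measure.map τ μ = volume.restrict (Set.Icc (0 : ℝ) 1))
    (n a b : ℕ) (hb : 1 ≤ b)
    (α : Fin n → Ω → ℝ) (hαmeas : ∀ i, Measurable (α i))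
    (hexch : ∀ π : Equiv.Perm (Fin n),
      Measure.map (fun ω => fun i => α (π i) ω) μ
        = Measure.map (fun ω => fun i => α i ω) μ)
    (hindep : IndepFun τ (fun ω => fun i => α i ω) μ)
    (last : Fin n)
    (P Pα : Ω → ℝ)
    (hP : P = fun ω => ((a : ℝ) + τ ω * (b : ℝ)) / (n : ℝ))
    (hPα : Pα = fun ω =>
      (((Finset.univ.filter (fun i : Fin n => α i ω < α last ω)).card : ℝ)
        + τ ω * ((Finset.univ.filter
            (fun i : Fin n => α i ω = α last ω)).card : ℝ)) / (n : ℝ)) :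
    (∀ ε : ℝ, ε ∈ Set.Icc (0 : ℝ) 1 →
        (ε ≤ (a : ℝ) / n → μ {ω | P ω ≤ ε} = 0)
        ∧ ((a : ℝ) / n ≤ ε → ε ≤ ((a : ℝ) + b) / n →
            μ {ω | P ω ≤ ε} = ENNReal.ofReal ((n * ε - a) / b))
        ∧ (((a : ℝ) + b) / n ≤ ε → μ {ω | P ω ≤ ε} = 1))
      ∧ ∀ ε : ℝ, ε ∈ Set.Icc (0 : ℝ) 1 →
          μ {ω | Pα ω ≤ ε} = ENNReal.ofReal ε := by
  have hn : (0 : ℝ) < n := by exact_mod_cast last.pos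
  have hb' : (0 : ℝ) < b := by exact_mod_cast hb
  refine ⟨fun ε _ => ?_, fun ε ⟨hε₀, hε₁⟩ => ?_⟩
  · have hcdf : μ {ω | P ω ≤ ε} = ENNReal.ofReal (min 1 (max 0 ((n * ε - a) / b))) := by
      simp only [hP, div_le_iff₀ hn, mul_comm ε]
      exact measure_add_mul_le_of_map_eq_uniform hτmeas hτunif hb' _
    refine ⟨fun h => ?_, fun h₁ h₂ => ?_, fun h => ?_⟩
    · rw [le_div_iff₀ hn] at h
      rw [hcdf, min_one_max_zero_of_nonpos (div_nonpos_of_nonpos_of_nonneg (by linarith) hb'.le),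
        ENNReal.ofReal_zero]
    · rw [div_le_iff₀ hn] at h₁
      rw [le_div_iff₀ hn] at h₂
      rw [hcdf, min_one_max_zero_of_mem_Icc (div_nonneg (by linarith) hb'.le)
        ((div_le_one hb').2 (by linarith))]
    · rw [div_le_iff₀ hn] at h
      rw [hcdf, min_one_max_zero_of_one_le ((one_le_div hb').2 (by linarith)), ENNReal.ofReal_one]
  · have hevent : {ω | Pα ω ≤ ε} = {ω | (#{j | α j ω < α last ω} : ℝ)
        + τ ω * #{j | α j ω = α last ω} ≤ n * ε} := by
      simp only [hPα, div_le_iff₀ hn, mul_comm ε]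
    rw [hevent, measure_randomizedRank_le hτmeas hτunif (measurable_pi_lambda _ hαmeas) hexch hindep
      last (by positivity) (by simpa using mul_le_of_le_one_right hn.le hε₁), Fintype.card_fin,
      mul_div_cancel_left₀ _ hn.ne']
end

section
/- Let Z₁, Z₂, … be a label-conditionally exchangeable sequence of observations in X × Y with Y finite, let τ₁, τ₂, … be i.i.d. uniform on [0,1] independent of the observations, and let p be the label-conditional conformal transducer associated with a label-conditionally equivariant conformity measure A. Then for each fixed n, the p-value Pₙ := p(Z₁,…,Zₙ,τₙ), where p(z₁,…,zₙ,τ) := (|{i : yᵢ = yₙ, αᵢ < αₙ}| + τ|{i : yᵢ = yₙ, αᵢ = αₙ}|)/|{i : yᵢ = yₙ}| with (α₁,…,αₙ) = A(z₁,…,zₙ), is uniformly distributed on [0,1]. -/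
/-!
Condition on the label pattern `y` of the whole sample, so that the last index ranges over the
label class `C = {i | y i = y last}`. For `j ∈ C`, the transposition of `last` and `j` preserves
the law of the sample on the event `labels = y` (label-conditional exchangeability) and, by
equivariance, turns the p-value at `last` into the randomized rank of `j` inside `C`. Hence
`P(p ≤ t, labels = y)` is the average over `j ∈ C` of `P(rank_j ≤ t, labels = y)`. For a fixed
sample the intervals `[#{α < α j}, #{α ≤ α j}]` tile `[0, #C]`, so, averaging over `τ`, the
events `rank_j ≤ t` have total probability `t * #C`.
-/

open MeasureTheory Finset ProbabilityTheory

namespace Finset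

variable {ι α : Type*}

theorem sum_image_sub_card_filter_lt [LinearOrder α] {M : Type*} [AddCommGroup M] (g : ℕ → M)
    (C : Finset ι) (a : ι → α) :
    ∑ v ∈ C.image a, (g #{i ∈ C | a i ≤ v} - g #{i ∈ C | a i < v}) = g #C - g 0 := by
  induction C using Finset.strongInduction with
  | H C ih =>
  rcases C.eq_empty_or_nonempty with rfl | hC
  · simp
  set v := (C.image a).max' (hC.image a)
  have hv : v ∈ C.image a := max'_mem _ _
  have hle : ∀ i ∈ C, a i ≤ v := fun i hi => le_max' _ _ (mem_image_of_mem a hi)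
  set C' := {i ∈ C | a i < v}
  have hC' : C' ⊂ C := by
    obtain ⟨i, hi, hiv⟩ := mem_image.mp hv
    exact ssubset_iff_of_subset (filter_subset _ _) |>.mpr ⟨i, hi, by simp [hiv]⟩
  have himage : C'.image a = (C.image a).erase v := by
    ext w
    simp only [C', mem_image, mem_erase, mem_filter]
    constructor
    · rintro ⟨i, ⟨hi, hiv⟩, rfl⟩
      exact ⟨hiv.ne, i, hi, rfl⟩
    · rintro ⟨hwv, i, hi, rfl⟩
      exact ⟨i, ⟨hi, (hle i hi).lt_of_ne hwv⟩, rfl⟩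
  have hrest : ∑ w ∈ C'.image a, (g #{i ∈ C | a i ≤ w} - g #{i ∈ C | a i < w})
      = g #C' - g 0 := by
    rw [← ih C' hC']
    refine sum_congr rfl fun w hw => ?_
    obtain ⟨j, hj, rfl⟩ := mem_image.mp hw
    have hjv : a j < v := (mem_filter.mp hj).2
    simp only [C', filter_filter]
    congr 3 <;> refine filter_congr fun i _ => ⟨fun h => ⟨?_, h⟩, And.right⟩
    exacts [h.trans_lt hjv, h.trans hjv]
  rw [← add_sum_erase _ _ hv, ← himage, hrest, filter_true_of_mem hle]
  abel

theorem sum_div_card_filter_eq_sum_image {K : Type*} [Field K] [CharZero K] [DecidableEq α]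
    (C : Finset ι) (a : ι → α) (h : α → K) :
    ∑ j ∈ C, h (a j) / #{i ∈ C | a i = a j} = ∑ v ∈ C.image a, h v := by
  rw [sum_comp (fun v => h v / #{i ∈ C | a i = v})]
  refine sum_congr rfl fun v hv => ?_
  obtain ⟨j, hj, rfl⟩ := mem_image.mp hv
  have : (#{i ∈ C | a i = a j} : K) ≠ 0 := Nat.cast_ne_zero.mpr (card_ne_zero.mpr ⟨j, by simp [hj]⟩)
  rw [nsmul_eq_mul, mul_div_cancel₀ _ this]

end Finset

open Set in
theorem volume_restrict_Icc_Iic (x : ℝ) :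
    volume.restrict (Icc (0 : ℝ) 1) (Iic x) = ENNReal.ofReal (min x 1) := by
  have : Iic x ∩ Icc 0 1 = Icc 0 (min x 1) := by
    ext; simp only [Set.mem_inter_iff, Set.mem_Iic, Set.mem_Icc, le_min_iff]; tauto
  rw [Measure.restrict_apply measurableSet_Iic, this, Real.volume_Icc, sub_zero]

open Set in
theorem volume_restrict_Icc_setOf_add_mul_le {b m c : ℝ} (hm : 0 < m) :
    volume.restrict (Icc (0 : ℝ) 1) {u | b + u * m ≤ c}
      = ENNReal.ofReal ((min c (b + m) - min c b) / m) := by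
  have hset : {u | b + u * m ≤ c} = Iic ((c - b) / m) := by
    ext u
    show b + u * m ≤ c ↔ u ≤ (c - b) / m
    rw [le_div_iff₀ hm]
    constructor <;> intro <;> linarith
  rw [hset, volume_restrict_Icc_Iic]
  rcases le_total c b with hcb | hbc
  · rw [min_eq_left (by linarith : c ≤ b + m), min_eq_left hcb, sub_self, zero_div,
      ENNReal.ofReal_zero, ENNReal.ofReal_eq_zero]
    exact min_le_of_left_le (div_nonpos_of_nonpos_of_nonneg (by linarith) hm.le)
  · rw [min_eq_right hbc, ← min_sub_sub_right, add_sub_cancel_left, ← min_div_div_right hm.le,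
      div_self hm.ne']

section RandomizedRank

variable {ι : Type*}

noncomputable def randomizedRank (C : Finset ι) (a : ι → ℝ) (j : ι) (u : ℝ) : ℝ :=
  (#{i ∈ C | a i < a j} + u * #{i ∈ C | a i = a j}) / #C

theorem sum_volume_randomizedRank_le {C : Finset ι} (hC : C.Nonempty) (a : ι → ℝ) {t : ℝ}
    (ht₀ : 0 ≤ t) (ht₁ : t ≤ 1) :
    ∑ j ∈ C, volume.restrict (Set.Icc (0 : ℝ) 1) {u | randomizedRank C a j u ≤ t}
      = ENNReal.ofReal (t * #C) := by
  classical
  have hN : (0 : ℝ) < #C := by exact_mod_cast hC.card_pos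
  set c := t * #C
  have hcard_le : ∀ j, (#{i ∈ C | a i ≤ a j} : ℝ)
      = #{i ∈ C | a i < a j} + #{i ∈ C | a i = a j} := by
    intro j
    rw [← Nat.cast_add, ← card_union_of_disjoint (disjoint_filter.mpr fun _ _ h => h.ne),
      ← filter_or]
    simp_rw [le_iff_lt_or_eq]
  have hterm : ∀ j ∈ C, volume.restrict (Set.Icc (0 : ℝ) 1) {u | randomizedRank C a j u ≤ t}
      = ENNReal.ofReal ((min c #{i ∈ C | a i ≤ a j} - min c #{i ∈ C | a i < a j})
          / #{i ∈ C | a i = a j}) := by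
    intro j hj
    have hm : (0 : ℝ) < #{i ∈ C | a i = a j} := by
      exact_mod_cast (card_pos.mpr ⟨j, by simp [hj]⟩ : 0 < #{i ∈ C | a i = a j})
    simp_rw [randomizedRank, div_le_iff₀ hN]
    rw [volume_restrict_Icc_setOf_add_mul_le hm, hcard_le]
  have hnonneg : ∀ j ∈ C, 0 ≤ (min c #{i ∈ C | a i ≤ a j} - min c #{i ∈ C | a i < a j})
      / (#{i ∈ C | a i = a j} : ℝ) := fun j _ => by
    refine div_nonneg (sub_nonneg.mpr (min_le_min_left c ?_)) (Nat.cast_nonneg _)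
    exact_mod_cast card_le_card (monotone_filter_right C fun _ _ => le_of_lt)
  rw [sum_congr rfl hterm, ← ENNReal.ofReal_sum_of_nonneg hnonneg,
    sum_div_card_filter_eq_sum_image C a
      (fun v => min c #{i ∈ C | a i ≤ v} - min c #{i ∈ C | a i < v}),
    sum_image_sub_card_filter_lt (fun k => min c (k : ℝ)), Nat.cast_zero,
    min_eq_left (by nlinarith), min_eq_right (by positivity), sub_zero]

theorem randomizedRank_comp_perm {C : Finset ι} {π : Equiv.Perm ι} (hC : ∀ i, π i ∈ C ↔ i ∈ C)
    (a : ι → ℝ) (j : ι) (u : ℝ) :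
    randomizedRank C (fun i => a (π i)) j u = randomizedRank C a (π j) u := by
  have hcard : ∀ p : ℝ → Prop, [DecidablePred p] → #{i ∈ C | p (a (π i))} = #{i ∈ C | p (a i)} :=
    fun p _ => card_equiv π fun i => by simp [hC]
  rw [randomizedRank, randomizedRank, hcard (· < a (π j)), hcard (· = a (π j))]

theorem measurable_randomizedRank {δ : Type*} [MeasurableSpace δ] {a : δ → ι → ℝ} {u : δ → ℝ}
    (ha : Measurable a) (hu : Measurable u) (C : Finset ι) (j : ι) :
    Measurable fun x => randomizedRank C (a x) j (u x) := by
  have hcard : ∀ r : ℝ → ℝ → Prop, [DecidableRel r] → MeasurableSet {p : ℝ × ℝ | r p.1 p.2} →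
      Measurable fun x => (#{i ∈ C | r (a x i) (a x j)} : ℝ) := by
    intro r _ hr
    simp_rw [card_filter, Nat.cast_sum, Nat.cast_ite, Nat.cast_one, Nat.cast_zero]
    refine Finset.measurable_sum _ fun i _ => Measurable.ite ?_ measurable_const measurable_const
    exact hr.preimage (((measurable_pi_apply i).comp ha).prodMk ((measurable_pi_apply j).comp ha))
  unfold randomizedRank
  have hlt := hcard (· < ·) (measurableSet_lt measurable_fst measurable_snd)
  have heq := hcard (· = ·) (measurableSet_diagonal)
  fun_prop

end RandomizedRank

open Set in
theorem eq_volume_restrict_Icc_of_Iic {m : Measure ℝ} [IsProbabilityMeasure m]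
    (h : ∀ t, 0 ≤ t → t ≤ 1 → m (Iic t) = ENNReal.ofReal t) :
    m = volume.restrict (Icc (0 : ℝ) 1) := by
  refine Measure.ext_of_Iic _ _ fun a => ?_
  rw [volume_restrict_Icc_Iic]
  rcases le_total a 0 with ha | ha
  · rw [ENNReal.ofReal_of_nonpos (min_le_of_left_le ha)]
    refine measure_mono_null (Iic_subset_Iic.mpr ha) ?_
    rw [h 0 le_rfl zero_le_one, ENNReal.ofReal_zero]
  rcases le_total a 1 with ha₁ | ha₁
  · rw [min_eq_left ha₁, h a ha ha₁]
  · rw [min_eq_right ha₁, ENNReal.ofReal_one]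
    refine le_antisymm prob_le_one ?_
    calc 1 = m (Iic 1) := by rw [h 1 zero_le_one le_rfl, ENNReal.ofReal_one]
      _ ≤ m (Iic a) := measure_mono (Iic_subset_Iic.mpr ha₁)

theorem lintegral_eq_tsum_setLIntegral_preimage_singleton {α β : Type*} [MeasurableSpace α]
    [MeasurableSpace β] [Countable β] [MeasurableSingletonClass β] {μ : Measure α} {g : α → β}
    (hg : Measurable g) (f : α → ENNReal) :
    ∫⁻ x, f x ∂μ = ∑' b, ∫⁻ x in g ⁻¹' {b}, f x ∂μ := by
  rw [← lintegral_iUnion (fun b => hg (measurableSet_singleton b)) (pairwise_disjoint_fiber g),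
    ← Set.preimage_iUnion, Set.iUnion_of_singleton, Set.preimage_univ, setLIntegral_univ]

section LabelConditional

variable {Ω ι X Y : Type*} [MeasurableSpace X] [MeasurableSpace Y]

def labels (z : ι → X × Y) : ι → Y := fun i => (z i).2

def LabelExchangeable [MeasurableSpace Ω] (μ : Measure Ω) (Z : ι → Ω → X × Y) : Prop :=
  ∀ (π : Equiv.Perm ι) (y : ι → Y) (E : ι → Set X), (∀ i, MeasurableSet (E i)) →
    (∀ i, y i = y (π i)) →
    μ {ω | (∀ i, (Z i ω).2 = y i) ∧ ∀ i, (Z i ω).1 ∈ E i}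
      = μ {ω | (∀ i, (Z i ω).2 = y i) ∧ ∀ i, (Z (π i) ω).1 ∈ E i}

def LabelEquivariant (A : (ι → X × Y) → ι → ℝ) : Prop :=
  ∀ (π : Equiv.Perm ι) (z : ι → X × Y), (∀ i, (z i).2 = (z (π i)).2) →
    A (fun i => z (π i)) = fun i => A z (π i)

noncomputable def labelConformalPValue [Fintype ι] [DecidableEq Y] (A : (ι → X × Y) → ι → ℝ)
    (j : ι) (z : ι → X × Y) (u : ℝ) : ℝ :=
  randomizedRank {i | (z i).2 = (z j).2} (A z) j u

theorem measurable_labels : Measurable (labels : (ι → X × Y) → ι → Y) :=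
  measurable_pi_lambda _ fun i => measurable_snd.comp (measurable_pi_apply i)

theorem LabelExchangeable.measurePreserving_restrict [MeasurableSpace Ω] [Finite ι]
    [MeasurableSingletonClass Y] {μ : Measure Ω} [IsFiniteMeasure μ] {Z : ι → Ω → X × Y}
    (hexch : LabelExchangeable μ Z) (hZ : ∀ i, Measurable (Z i)) {y : ι → Y}
    {π : Equiv.Perm ι} (hπ : ∀ i, y i = y (π i)) :
    MeasurePreserving (fun z i => z (π i))
      ((μ.map fun ω i => Z i ω).restrict (labels ⁻¹' {y}))
      ((μ.map fun ω i => Z i ω).restrict (labels ⁻¹' {y})) := by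
  have hZv : Measurable fun ω i => Z i ω := measurable_pi_lambda _ hZ
  have hL : MeasurableSet (labels ⁻¹' {y} : Set (ι → X × Y)) :=
    measurable_labels (measurableSet_singleton y)
  have hperm : ∀ σ : Equiv.Perm ι, Measurable fun (z : ι → X × Y) i => z (σ i) :=
    fun σ => measurable_pi_lambda _ fun i => measurable_pi_apply (σ i)
  -- on the event `labels = y`, a box condition on `Z ∘ σ` only constrains the `X`-components
  have hbox : ∀ σ : Equiv.Perm ι, (∀ i, y i = y (σ i)) → ∀ S : ι → Set (X × Y),
      (fun ω i => Z i ω) ⁻¹' ((fun z i => z (σ i)) ⁻¹' Set.univ.pi S ∩ labels ⁻¹' {y})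
        = {ω | (∀ i, (Z i ω).2 = y i) ∧ ∀ i, (Z (σ i) ω).1 ∈ {x | (x, y i) ∈ S i}} := by
    intro σ hσ S
    ext ω
    simp only [labels, Set.mem_inter_iff, Set.mem_preimage, Set.mem_pi, Set.mem_univ,
      true_imp_iff, Set.mem_singleton_iff, funext_iff, Set.mem_ofPred_eq]
    refine and_comm.trans (and_congr_right fun hy => forall_congr' fun i => ?_)
    rw [hσ i, ← hy (σ i)]
  refine ⟨hperm π, ext_of_generate_finite _ generateFrom_pi.symm isPiSystem_pi ?_ ?_⟩
  · rintro _ ⟨S, hS, rfl⟩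
    have hSpi : MeasurableSet (Set.univ.pi S) := .univ_pi fun i => hS i (Set.mem_univ i)
    have hE : ∀ i, MeasurableSet {x | (x, y i) ∈ S i} :=
      fun i => measurable_prodMk_right (hS i (Set.mem_univ i))
    rw [Measure.map_apply (hperm π) hSpi, Measure.restrict_apply (hperm π hSpi),
      Measure.restrict_apply hSpi, Measure.map_apply hZv ((hperm π hSpi).inter hL),
      Measure.map_apply hZv (hSpi.inter hL), hbox π hπ, ← hexch π y _ hE hπ]
    exact congrArg μ (hbox (Equiv.refl ι) (fun _ => rfl) S).symm
  · rw [Measure.map_apply (hperm π) .univ, Set.preimage_univ]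

theorem measurable_labelConformalPValue [Fintype ι] [DecidableEq Y] [Countable Y]
    [MeasurableSingletonClass Y] {A : (ι → X × Y) → ι → ℝ} (hA : Measurable A) (j : ι) :
    Measurable fun p : (ι → X × Y) × ℝ => labelConformalPValue A j p.1 p.2 := by
  have hF : Measurable fun q : ((ι → X × Y) × ℝ) × (ι → Y) =>
      randomizedRank {i | q.2 i = q.2 j} (A q.1.1) j q.1.2 := by
    refine measurable_from_prod_countable_left fun y => ?_
    show Measurable fun p : (ι → X × Y) × ℝ => randomizedRank {i | y i = y j} (A p.1) j p.2
    exact measurable_randomizedRank (hA.comp measurable_fst) measurable_snd _ j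
  have hG : Measurable fun p : (ι → X × Y) × ℝ => (p, labels p.1) :=
    measurable_id.prodMk (measurable_labels.comp measurable_fst)
  exact (hF.comp hG :)

theorem measurable_volume_randomizedRank_le {A : (ι → X × Y) → ι → ℝ} (hA : Measurable A)
    (C : Finset ι) (j : ι) (t : ℝ) :
    Measurable fun z => volume.restrict (Set.Icc (0 : ℝ) 1) {u | randomizedRank C (A z) j u ≤ t} :=
  measurable_measure_prodMk_left
    (measurableSet_le (measurable_randomizedRank (hA.comp measurable_fst) measurable_snd C j)
      measurable_const)

theorem setLIntegral_volume_randomizedRank_le_swap [Fintype ι] [DecidableEq ι] [DecidableEq Y]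
    [MeasurableSingletonClass Y] {ρ : Measure (ι → X × Y)} {y : ι → Y}
    (hρ : ∀ π : Equiv.Perm ι, (∀ i, y i = y (π i)) →
      MeasurePreserving (fun z i => z (π i)) (ρ.restrict (labels ⁻¹' {y}))
        (ρ.restrict (labels ⁻¹' {y})))
    {A : (ι → X × Y) → ι → ℝ} (hA : Measurable A) (hequiv : LabelEquivariant A)
    {j₀ j : ι} (hj : y j = y j₀) (t : ℝ) :
    ∫⁻ z in labels ⁻¹' {y}, volume.restrict (Set.Icc (0 : ℝ) 1)
        {u | randomizedRank {i | y i = y j₀} (A z) j₀ u ≤ t} ∂ρ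
      = ∫⁻ z in labels ⁻¹' {y}, volume.restrict (Set.Icc (0 : ℝ) 1)
        {u | randomizedRank {i | y i = y j₀} (A z) j u ≤ t} ∂ρ := by
  have hπ : ∀ i, y i = y (Equiv.swap j₀ j i) :=
    fun i => (Equiv.apply_swap_eq_self hj.symm i).symm
  rw [← (hρ _ hπ).lintegral_comp (measurable_volume_randomizedRank_le hA _ j₀ t)]
  refine setLIntegral_congr_fun (measurable_labels (measurableSet_singleton y))
    fun z (hz : labels z = y) => ?_
  have hzπ : ∀ i, (z i).2 = (z (Equiv.swap j₀ j i)).2 := by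
    rw [← hz] at hπ
    exact hπ
  have hCπ : ∀ i, Equiv.swap j₀ j i ∈ ({i | y i = y j₀} : Finset ι)
      ↔ i ∈ ({i | y i = y j₀} : Finset ι) :=
    fun i => by simp [← hπ i]
  simp only [hequiv _ z hzπ, randomizedRank_comp_perm hCπ, Equiv.swap_apply_left]

theorem setLIntegral_volume_labelConformalPValue_le [Fintype ι] [DecidableEq ι] [DecidableEq Y]
    [MeasurableSingletonClass Y] {ρ : Measure (ι → X × Y)} {y : ι → Y}
    (hρ : ∀ π : Equiv.Perm ι, (∀ i, y i = y (π i)) →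
      MeasurePreserving (fun z i => z (π i)) (ρ.restrict (labels ⁻¹' {y}))
        (ρ.restrict (labels ⁻¹' {y})))
    {A : (ι → X × Y) → ι → ℝ} (hA : Measurable A) (hequiv : LabelEquivariant A) (j₀ : ι)
    {t : ℝ} (ht₀ : 0 ≤ t) (ht₁ : t ≤ 1) :
    ∫⁻ z in labels ⁻¹' {y},
        volume.restrict (Set.Icc (0 : ℝ) 1) {u | labelConformalPValue A j₀ z u ≤ t} ∂ρ
      = ENNReal.ofReal t * ρ (labels ⁻¹' {y}) := by
  set L : Set (ι → X × Y) := labels ⁻¹' {y}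
  set C : Finset ι := {i | y i = y j₀}
  have hC : C.Nonempty := ⟨j₀, by simp [C]⟩
  set h : ι → (ι → X × Y) → ENNReal :=
    fun j z => volume.restrict (Set.Icc (0 : ℝ) 1) {u | randomizedRank C (A z) j u ≤ t}
  have hpvalue : ∫⁻ z in L, volume.restrict (Set.Icc (0 : ℝ) 1)
      {u | labelConformalPValue A j₀ z u ≤ t} ∂ρ = ∫⁻ z in L, h j₀ z ∂ρ := by
    refine setLIntegral_congr_fun (measurable_labels (measurableSet_singleton y)) fun z hz => ?_
    obtain rfl : labels z = y := hz
    rfl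
  have hsum : (#C : ENNReal) * ∫⁻ z in L, h j₀ z ∂ρ
      = (#C : ENNReal) * (ENNReal.ofReal t * ρ L) := by
    calc (#C : ENNReal) * ∫⁻ z in L, h j₀ z ∂ρ
        = ∑ j ∈ C, ∫⁻ z in L, h j z ∂ρ := by
          rw [← sum_congr rfl fun j hj => setLIntegral_volume_randomizedRank_le_swap hρ hA hequiv
            (mem_filter.mp hj).2 t, sum_const, nsmul_eq_mul]
      _ = ∫⁻ z in L, ENNReal.ofReal (t * #C) ∂ρ := by
        rw [← lintegral_finsetSum _ fun j _ => measurable_volume_randomizedRank_le hA C j t]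
        exact lintegral_congr fun z => sum_volume_randomizedRank_le hC (A z) ht₀ ht₁
      _ = (#C : ENNReal) * (ENNReal.ofReal t * ρ L) := by
        rw [setLIntegral_const, ENNReal.ofReal_mul ht₀, ENNReal.ofReal_natCast]
        ring
  rw [hpvalue]
  exact (ENNReal.mul_right_inj (Nat.cast_ne_zero.mpr hC.card_pos.ne')
    (ENNReal.natCast_ne_top _)).mp hsum

theorem map_prod_labelConformalPValue [Fintype ι] [DecidableEq ι] [DecidableEq Y] [Countable Y]
    [MeasurableSingletonClass Y] {ρ : Measure (ι → X × Y)} [IsProbabilityMeasure ρ]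
    (hρ : ∀ (y : ι → Y) (π : Equiv.Perm ι), (∀ i, y i = y (π i)) →
      MeasurePreserving (fun z i => z (π i)) (ρ.restrict (labels ⁻¹' {y}))
        (ρ.restrict (labels ⁻¹' {y})))
    {A : (ι → X × Y) → ι → ℝ} (hA : Measurable A) (hequiv : LabelEquivariant A) (j₀ : ι) :
    (ρ.prod (volume.restrict (Set.Icc (0 : ℝ) 1))).map
        (fun p => labelConformalPValue A j₀ p.1 p.2)
      = volume.restrict (Set.Icc (0 : ℝ) 1) := by
  have hF := measurable_labelConformalPValue hA j₀
  have : IsProbabilityMeasure (volume.restrict (Set.Icc (0 : ℝ) 1)) := ⟨by simp⟩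
  have := Measure.isProbabilityMeasure_map (μ := ρ.prod (volume.restrict (Set.Icc (0 : ℝ) 1)))
    hF.aemeasurable
  refine eq_volume_restrict_Icc_of_Iic fun t ht₀ ht₁ => ?_
  rw [Measure.map_apply hF measurableSet_Iic, Measure.prod_apply (hF measurableSet_Iic),
    lintegral_eq_tsum_setLIntegral_preimage_singleton measurable_labels]
  calc ∑' y, ∫⁻ z in labels ⁻¹' {y}, volume.restrict (Set.Icc (0 : ℝ) 1)
        {u | labelConformalPValue A j₀ z u ≤ t} ∂ρ
      = ∑' y, ∫⁻ z in labels ⁻¹' {y}, ENNReal.ofReal t ∂ρ := by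
        refine tsum_congr fun y => ?_
        rw [setLIntegral_volume_labelConformalPValue_le (hρ y) hA hequiv j₀ ht₀ ht₁,
          setLIntegral_const]
    _ = ENNReal.ofReal t := by
      rw [← lintegral_eq_tsum_setLIntegral_preimage_singleton measurable_labels, lintegral_const,
        measure_univ, mul_one]

end LabelConditional

/-- Proposition 1, fixed `n`: For a label-conditionally
exchangeable family `Z 0, …, Z n` of observations, `τ` uniform on `[0,1]`
independent of the observations, and `A` a label-conditionally equivariant
conformity measure, the label-conditional conformal p-value
`P = (|{i : y i = y last, α i < α last}| + τ·|{i : y i = y last, α i = α last}|)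
/ |{i : y i = y last}|` is uniformly distributed on `[0,1]`. -/
theorem label_conditional_pvalue_uniform
    {Ω 𝓧 𝓨 : Type*} [MeasurableSpace Ω] [MeasurableSpace 𝓧]
    [Fintype 𝓨] [DecidableEq 𝓨] [MeasurableSpace 𝓨] [MeasurableSingletonClass 𝓨]
    (μ : Measure Ω) [IsProbabilityMeasure μ] (n : ℕ)
    (Z : Fin (n + 1) → Ω → 𝓧 × 𝓨) (hZmeas : ∀ i, Measurable (Z i))
    (hexch : ∀ (π : Equiv.Perm (Fin (n + 1))) (y : Fin (n + 1) → 𝓨)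
        (E : Fin (n + 1) → Set 𝓧),
      (∀ i, MeasurableSet (E i)) → (∀ i, y i = y (π i)) →
      μ {ω | (∀ i, (Z i ω).2 = y i) ∧ ∀ i, (Z i ω).1 ∈ E i}
        = μ {ω | (∀ i, (Z i ω).2 = y i) ∧ ∀ i, (Z (π i) ω).1 ∈ E i})
    (A : (Fin (n + 1) → 𝓧 × 𝓨) → (Fin (n + 1) → ℝ)) (hAmeas : Measurable A)
    (hequiv : ∀ (π : Equiv.Perm (Fin (n + 1))) (z : Fin (n + 1) → 𝓧 × 𝓨),
      (∀ i, (z i).2 = (z (π i)).2) →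
      A (fun i => z (π i)) = fun i => A z (π i))
    (τ : Ω → ℝ) (hτmeas : Measurable τ)
    (hτunif : Measure.map τ μ = volume.restrict (Set.Icc (0 : ℝ) 1))
    (hindep : IndepFun τ (fun ω => fun i => Z i ω) μ)
    (α : Fin (n + 1) → Ω → ℝ) (hα : α = fun i ω => A (fun j => Z j ω) i)
    (P : Ω → ℝ)
    (hP : P = fun ω =>
      (((Finset.univ.filter (fun i : Fin (n + 1) =>
          (Z i ω).2 = (Z (Fin.last n) ω).2
            ∧ α i ω < α (Fin.last n) ω)).card : ℝ)
        + τ ω * ((Finset.univ.filter (fun i : Fin (n + 1) =>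
          (Z i ω).2 = (Z (Fin.last n) ω).2
            ∧ α i ω = α (Fin.last n) ω)).card : ℝ))
        / ((Finset.univ.filter (fun i : Fin (n + 1) =>
          (Z i ω).2 = (Z (Fin.last n) ω).2)).card : ℝ)) :
    Measure.map P μ = volume.restrict (Set.Icc (0 : ℝ) 1) := by
  have hZ : Measurable fun ω i => Z i ω := measurable_pi_lambda _ hZmeas
  have := Measure.isProbabilityMeasure_map (μ := μ) hZ.aemeasurable
  have hlaw : μ.map (fun ω => ((fun i => Z i ω), τ ω))
      = (μ.map fun ω i => Z i ω).prod (volume.restrict (Set.Icc (0 : ℝ) 1)) := by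
    rw [← hτunif]
    exact (indepFun_iff_map_prod_eq_prod_map_map hZ.aemeasurable hτmeas.aemeasurable).mp
      hindep.symm
  have hPvalue : P = (fun p => labelConformalPValue A (Fin.last n) p.1 p.2)
      ∘ fun ω => ((fun i => Z i ω), τ ω) := by
    subst hP hα
    ext ω
    simp only [Function.comp_apply, labelConformalPValue, randomizedRank, filter_filter]
  rw [hPvalue, ← Measure.map_map (measurable_labelConformalPValue hAmeas _) (hZ.prodMk hτmeas),
    hlaw]
  exact map_prod_labelConformalPValue
    (fun _ _ hπ => LabelExchangeable.measurePreserving_restrict hexch hZmeas hπ) hAmeas hequiv _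
end
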